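/- arXiv:2505.04130 — 6 statements merged into one kernel-verified Lean document; each statement's English description precedes it below -/
import Mathlib

section
/- Let Γ be a countably infinite group with a fixed enumeration (γ_n)_{n∈ℕ}. For subsets A, B ⊆ Γ define recursively X_n^{A,B} = (A \ ⋃_{m<n} X_m^{A,B}) ∩ ((B \ ⋃_{m<n} X_m^{A,B}·γ_m)·γ_n^{-1}), and let φ^{A,B} be the map sending γ ∈ X_n^{A,B} to γ·γ_n. Let μ be an ergodic Γ-invariant Borel probability measure on 2^Γ × 2^Γ (diagonal left-translation action) such that μ-almost surely both coordinates A and B are infinite, and suppose μ({(A,B) : 1_Γ ∈ A}) = μ({(A,B) : 1_Γ ∈ B}). Then for μ-almost every pair (A, B), the map φ^{A,B} is a bijection from A onto B. -/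
/-!
At stage `n` the greedy matching pairs every still unmatched `x ∈ A` with `x * g n` whenever
that is a still unmatched point of `B`. So unmatched points never remain on both sides at once
(an unmatched `a ∈ A` and `b ∈ B` would be paired at the stage with `g n = a⁻¹ * b`), and the
construction commutes with left translation. Mass transport: `1 ∈ B` is hit at stage `n`
exactly when `(g n)⁻¹ ∈ X_n`, which by invariance is as likely as `1 ∈ X_n`. Equal densities
of `A` and `B` then give equal probabilities that `1` is an unmatched point of `A`, resp. of
`B`. By ergodicity, "some point of `A` is unmatched" has probability `0` or `1`; in the second
case no point of `B` is unmatched almost surely, and both probabilities vanish.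
-/

open MeasureTheory

section GreedyMatching

variable {Γ : Type*} [Group Γ]

def IsGreedyMatching (g : ℕ → Γ) (Xn : ℕ → Set Γ → Set Γ → Set Γ) : Prop :=
  ∀ (n : ℕ) (A B : Set Γ), Xn n A B =
    (A \ ⋃ m < n, Xn m A B) ∩
      ((fun x => x * (g n)⁻¹) '' (B \ ⋃ m < n, (fun x => x * g m) '' Xn m A B))

namespace IsGreedyMatching

variable {g : ℕ → Γ} {Xn : ℕ → Set Γ → Set Γ → Set Γ} (hX : IsGreedyMatching g Xn)
include hX

theorem mem_iff {n : ℕ} {A B : Set Γ} {x : Γ} : x ∈ Xn n A B ↔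
    (x ∈ A ∧ ∀ m < n, x ∉ Xn m A B) ∧
    (x * g n ∈ B ∧ ∀ m < n, x * g n * (g m)⁻¹ ∉ Xn m A B) := by
  rw [hX]
  simp only [Set.mem_inter_iff, Set.mem_sdiff, Set.mem_iUnion, Set.image_mul_right,
    Set.mem_preimage, inv_inv, not_exists, exists_prop]
  tauto

theorem mem_left {n : ℕ} {A B : Set Γ} {x : Γ} (h : x ∈ Xn n A B) : x ∈ A :=
  (hX.mem_iff.mp h).1.1

theorem mul_mem_right {n : ℕ} {A B : Set Γ} {x : Γ} (h : x ∈ Xn n A B) : x * g n ∈ B :=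
  (hX.mem_iff.mp h).2.1

theorem eq_of_mem_of_mem {m n : ℕ} {A B : Set Γ} {x : Γ}
    (hm : x ∈ Xn m A B) (hn : x ∈ Xn n A B) : m = n := by
  by_contra hne
  rcases Nat.lt_or_gt_of_ne hne with h | h
  · exact (hX.mem_iff.mp hn).1.2 m h hm
  · exact (hX.mem_iff.mp hm).1.2 n h hn

theorem eq_of_mul_eq {m n : ℕ} {A B : Set Γ} {x y : Γ}
    (hx : x ∈ Xn m A B) (hy : y ∈ Xn n A B) (hxy : x * g m = y * g n) : x = y := by
  obtain rfl : m = n := by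
    by_contra hne
    rcases Nat.lt_or_gt_of_ne hne with h | h
    · exact (hX.mem_iff.mp hy).2.2 m h (by rwa [← hxy, mul_inv_cancel_right])
    · exact (hX.mem_iff.mp hx).2.2 n h (by rwa [hxy, mul_inv_cancel_right])
  exact mul_right_cancel hxy

theorem left_matched_or_right_matched (hg : Function.Surjective g) (A B : Set Γ) :
    (∀ a ∈ A, ∃ n, a ∈ Xn n A B) ∨ (∀ b ∈ B, ∃ n, b * (g n)⁻¹ ∈ Xn n A B) := by
  by_contra! ⟨⟨a, ha, hna⟩, ⟨b, hb, hnb⟩⟩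
  obtain ⟨n, hn⟩ := hg (a⁻¹ * b)
  have hab : a * g n = b := by rw [hn, mul_inv_cancel_left]
  exact hna n (hX.mem_iff.mpr
    ⟨⟨ha, fun m _ => hna m⟩, hab ▸ hb, fun m _ => hab ▸ hnb m⟩)

theorem mem_translate_iff (n : ℕ) (A B : Set Γ) (γ x : Γ) :
    x ∈ Xn n {a | γ⁻¹ * a ∈ A} {b | γ⁻¹ * b ∈ B} ↔ γ⁻¹ * x ∈ Xn n A B := by
  induction n using Nat.strong_induction_on generalizing x with
  | _ n ih =>
    have hassoc (m : ℕ) : γ⁻¹ * (x * g n * (g m)⁻¹) = γ⁻¹ * x * g n * (g m)⁻¹ := by group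
    rw [hX.mem_iff, hX.mem_iff]
    simp only [Set.mem_ofPred_eq, ← mul_assoc]
    refine and_congr (and_congr Iff.rfl ?_) (and_congr Iff.rfl ?_) <;>
      refine forall₂_congr fun m hm => not_congr ?_
    · exact ih m hm x
    · rw [ih m hm, hassoc]

theorem exists_bijOn {A B : Set Γ} (hA : ∀ a ∈ A, ∃ n, a ∈ Xn n A B)
    (hB : ∀ b ∈ B, ∃ n, b * (g n)⁻¹ ∈ Xn n A B) :
    ∃ φ : Γ → Γ, (∀ n, ∀ x ∈ Xn n A B, φ x = x * g n) ∧
      (⋃ n, Xn n A B) = A ∧ Set.BijOn φ A B := by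
  classical
  let φ : Γ → Γ := fun x => if h : ∃ n, x ∈ Xn n A B then x * g h.choose else x
  have hφ : ∀ n, ∀ x ∈ Xn n A B, φ x = x * g n := fun n x hx => by
    have h : ∃ m, x ∈ Xn m A B := ⟨n, hx⟩
    simp only [φ, dif_pos h, hX.eq_of_mem_of_mem h.choose_spec hx]
  refine ⟨φ, hφ, ?_, ?_, ?_, ?_⟩
  · ext x
    simpa only [Set.mem_iUnion] using ⟨fun ⟨n, hn⟩ => hX.mem_left hn, hA x⟩
  · intro x hx
    obtain ⟨n, hn⟩ := hA x hx
    rw [hφ n x hn]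
    exact hX.mul_mem_right hn
  · intro x hx y hy hxy
    obtain ⟨m, hm⟩ := hA x hx
    obtain ⟨n, hn⟩ := hA y hy
    rw [hφ m x hm, hφ n y hn] at hxy
    exact hX.eq_of_mul_eq hm hn hxy
  · intro b hb
    obtain ⟨n, hn⟩ := hB b hb
    exact ⟨_, hX.mem_left hn, by rw [hφ n _ hn, inv_mul_cancel_right]⟩

end IsGreedyMatching

end GreedyMatching

section InvariantFamilies

variable {G Ω : Type*} [Group G] {T : G → Ω → Ω} {u : G → Set Ω}

theorem measure_eq_measure_one_of_preimage_eq [MeasurableSpace Ω] {μ : Measure Ω}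
    (hT : ∀ γ, MeasurePreserving (T γ) μ μ) (hu : ∀ γ δ, T γ ⁻¹' u δ = u (γ⁻¹ * δ))
    (hmeas : ∀ δ, MeasurableSet (u δ)) (δ : G) : μ (u δ) = μ (u 1) := by
  rw [← (hT δ).measure_preimage (hmeas δ).nullMeasurableSet, hu, inv_mul_cancel]

theorem preimage_iUnion_eq_of_preimage_eq (hu : ∀ γ δ, T γ ⁻¹' u δ = u (γ⁻¹ * δ)) (γ : G) :
    T γ ⁻¹' ⋃ δ, u δ = ⋃ δ, u δ := by
  simp only [Set.preimage_iUnion, hu]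
  exact (Equiv.mulLeft γ⁻¹).surjective.iUnion_comp u

end InvariantFamilies

section Configurations

variable {Γ : Type*}

theorem measurableSet_fst_eq_true (γ : Γ) :
    MeasurableSet {p : (Γ → Bool) × (Γ → Bool) | p.1 γ = true} :=
  measurableSet_eq_fun (by fun_prop) measurable_const

theorem measurableSet_snd_eq_true (γ : Γ) :
    MeasurableSet {p : (Γ → Bool) × (Γ → Bool) | p.2 γ = true} :=
  measurableSet_eq_fun (by fun_prop) measurable_const

variable [Group Γ]

def diagShift (γ : Γ) (p : (Γ → Bool) × (Γ → Bool)) : (Γ → Bool) × (Γ → Bool) :=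
  (fun a => p.1 (γ⁻¹ * a), fun b => p.2 (γ⁻¹ * b))

theorem measurable_diagShift (γ : Γ) : Measurable (diagShift γ) := by
  unfold diagShift
  fun_prop

variable (g : ℕ → Γ) (Xn : ℕ → Set Γ → Set Γ → Set Γ)

def matchedAt (n : ℕ) (γ : Γ) : Set ((Γ → Bool) × (Γ → Bool)) :=
  {p | γ ∈ Xn n {a | p.1 a = true} {b | p.2 b = true}}

def unmatchedLeft (γ : Γ) : Set ((Γ → Bool) × (Γ → Bool)) :=
  {p | p.1 γ = true} ∩ ⋂ n, (matchedAt Xn n γ)ᶜ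

def unmatchedRight (γ : Γ) : Set ((Γ → Bool) × (Γ → Bool)) :=
  {p | p.2 γ = true} ∩ ⋂ n, (matchedAt Xn n (γ * (g n)⁻¹))ᶜ

variable {g Xn}

namespace IsGreedyMatching

variable (hX : IsGreedyMatching g Xn)
include hX

theorem measurableSet_matchedAt (n : ℕ) (γ : Γ) : MeasurableSet (matchedAt Xn n γ) := by
  induction n using Nat.strong_induction_on generalizing γ with
  | _ n ih =>
    have hrepr : matchedAt Xn n γ =
        ({p | p.1 γ = true} ∩ ⋂ m ∈ Finset.range n, (matchedAt Xn m γ)ᶜ) ∩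
          ({p | p.2 (γ * g n) = true} ∩
            ⋂ m ∈ Finset.range n, (matchedAt Xn m (γ * g n * (g m)⁻¹))ᶜ) := by
      ext p
      simp only [matchedAt, Set.mem_ofPred_eq]
      rw [hX.mem_iff]
      simp only [Set.mem_inter_iff, Set.mem_iInter, Set.mem_compl_iff, Finset.mem_range,
        Set.mem_ofPred_eq]
    rw [hrepr]
    refine ((measurableSet_fst_eq_true γ).inter ?_).inter
      ((measurableSet_snd_eq_true _).inter ?_) <;>
    exact .biInter (Set.to_countable _) fun m hm => (ih m (Finset.mem_range.mp hm) _).compl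

theorem measurableSet_unmatchedLeft (γ : Γ) : MeasurableSet (unmatchedLeft Xn γ) :=
  (measurableSet_fst_eq_true γ).inter (.iInter fun n => (hX.measurableSet_matchedAt n γ).compl)

theorem measurableSet_unmatchedRight (γ : Γ) : MeasurableSet (unmatchedRight g Xn γ) :=
  (measurableSet_snd_eq_true γ).inter (.iInter fun n => (hX.measurableSet_matchedAt n _).compl)

theorem preimage_diagShift_matchedAt (γ δ : Γ) (n : ℕ) :
    diagShift γ ⁻¹' matchedAt Xn n δ = matchedAt Xn n (γ⁻¹ * δ) :=
  Set.ext fun p => hX.mem_translate_iff n {a | p.1 a = true} {b | p.2 b = true} γ δ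

theorem preimage_diagShift_unmatchedLeft (γ δ : Γ) :
    diagShift γ ⁻¹' unmatchedLeft Xn δ = unmatchedLeft Xn (γ⁻¹ * δ) := by
  simp only [unmatchedLeft, Set.preimage_inter, Set.preimage_iInter, Set.preimage_compl,
    hX.preimage_diagShift_matchedAt]
  rfl

theorem preimage_diagShift_unmatchedRight (γ δ : Γ) :
    diagShift γ ⁻¹' unmatchedRight g Xn δ = unmatchedRight g Xn (γ⁻¹ * δ) := by
  simp only [unmatchedRight, Set.preimage_inter, Set.preimage_iInter, Set.preimage_compl,
    hX.preimage_diagShift_matchedAt, mul_assoc]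
  rfl

theorem disjoint_iUnion_unmatched (hg : Function.Surjective g) :
    Disjoint (⋃ γ, unmatchedLeft Xn γ) (⋃ γ, unmatchedRight g Xn γ) := by
  refine Set.disjoint_iUnion_left.2 fun a => Set.disjoint_iUnion_right.2 fun b => ?_
  rw [Set.disjoint_left]
  rintro p ⟨hpa, hpa'⟩ ⟨hpb, hpb'⟩
  rcases hX.left_matched_or_right_matched hg {a | p.1 a = true} {b | p.2 b = true} with h | h
  · obtain ⟨n, hn⟩ := h a hpa
    exact Set.mem_iInter.1 hpa' n hn
  · obtain ⟨n, hn⟩ := h b hpb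
    exact Set.mem_iInter.1 hpb' n hn

variable (μ : Measure ((Γ → Bool) × (Γ → Bool)))

theorem measure_fst_one_eq :
    μ {p | p.1 1 = true} = μ (unmatchedLeft Xn 1) + ∑' n, μ (matchedAt Xn n 1) := by
  have hsub : ⋃ n, matchedAt Xn n 1 ⊆ {p | p.1 1 = true} :=
    Set.iUnion_subset fun n p hp => hX.mem_left hp
  have hdisj : Pairwise (Function.onFun Disjoint fun n => matchedAt Xn n 1) := fun m n hmn =>
    Set.disjoint_left.2 fun p (hm : p ∈ matchedAt Xn m 1) hn => hmn (hX.eq_of_mem_of_mem hm hn)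
  have hmeas : MeasurableSet (⋃ n, matchedAt Xn n 1) :=
    .iUnion fun n => hX.measurableSet_matchedAt n 1
  rw [← measure_iUnion hdisj fun n => hX.measurableSet_matchedAt n 1,
    ← measure_sdiff_add_inter _ hmeas, Set.inter_eq_right.2 hsub, unmatchedLeft, Set.sdiff_eq,
    Set.compl_iUnion]

theorem measure_snd_one_eq :
    μ {p | p.2 1 = true} =
      μ (unmatchedRight g Xn 1) + ∑' n, μ (matchedAt Xn n (g n)⁻¹) := by
  have hsub : ⋃ n, matchedAt Xn n (g n)⁻¹ ⊆ {p | p.2 1 = true} :=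
    Set.iUnion_subset fun n p hp => by simpa using hX.mul_mem_right hp
  have hdisj : Pairwise (Function.onFun Disjoint fun n => matchedAt Xn n (g n)⁻¹) := fun m n hmn =>
    Set.disjoint_left.2 fun p (hm : p ∈ matchedAt Xn m (g m)⁻¹) hn => by
      have hinv : (g m)⁻¹ = (g n)⁻¹ :=
        hX.eq_of_mul_eq hm hn (by rw [inv_mul_cancel, inv_mul_cancel])
      exact hmn (hX.eq_of_mem_of_mem hm (hinv ▸ hn))
  have hmeas : MeasurableSet (⋃ n, matchedAt Xn n (g n)⁻¹) :=
    .iUnion fun n => hX.measurableSet_matchedAt n _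
  rw [← measure_iUnion hdisj fun n => hX.measurableSet_matchedAt n _,
    ← measure_sdiff_add_inter _ hmeas, Set.inter_eq_right.2 hsub, unmatchedRight, Set.sdiff_eq,
    Set.compl_iUnion]
  simp only [one_mul]

theorem measure_unmatchedLeft_one_eq [IsFiniteMeasure μ]
    (hT : ∀ γ, MeasurePreserving (diagShift γ) μ μ)
    (heq : μ {p | p.1 1 = true} = μ {p | p.2 1 = true}) :
    μ (unmatchedLeft Xn 1) = μ (unmatchedRight g Xn 1) := by
  have hshift (n : ℕ) : μ (matchedAt Xn n (g n)⁻¹) = μ (matchedAt Xn n 1) :=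
    measure_eq_measure_one_of_preimage_eq hT (hX.preimage_diagShift_matchedAt · · n)
      (hX.measurableSet_matchedAt n) _
  have hfin : ∑' n, μ (matchedAt Xn n 1) ≠ ⊤ :=
    ne_top_of_le_ne_top (measure_ne_top μ _) (le_add_self.trans_eq (hX.measure_fst_one_eq μ).symm)
  rw [hX.measure_fst_one_eq, hX.measure_snd_one_eq, tsum_congr hshift] at heq
  exact (ENNReal.add_left_inj hfin).1 heq

end IsGreedyMatching

end Configurations

theorem stmt_3_general {Γ : Type*} [Group Γ] [Countable Γ]
    (g : ℕ → Γ) (hg : Function.Bijective g)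
    (Xn : ℕ → Set Γ → Set Γ → Set Γ)
    (hXn : ∀ (n : ℕ) (A B : Set Γ), Xn n A B =
      (A \ ⋃ m < n, Xn m A B) ∩
        ((fun x => x * (g n)⁻¹) '' (B \ ⋃ m < n, (fun x => x * g m) '' Xn m A B)))
    (μ : Measure ((Γ → Bool) × (Γ → Bool)))
    [IsProbabilityMeasure μ]
    (hinv : ∀ γ : Γ, Measure.map
      (fun p : (Γ → Bool) × (Γ → Bool) =>
        ((fun a => p.1 (γ⁻¹ * a)), fun b => p.2 (γ⁻¹ * b))) μ = μ)
    (herg : ∀ s : Set ((Γ → Bool) × (Γ → Bool)), MeasurableSet s →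
      (∀ γ : Γ, (fun p : (Γ → Bool) × (Γ → Bool) =>
        ((fun a => p.1 (γ⁻¹ * a)), fun b => p.2 (γ⁻¹ * b))) ⁻¹' s = s) →
      μ s = 0 ∨ μ s = 1)
    (heq : μ {p | p.1 1 = true} = μ {p | p.2 1 = true}) :
    ∀ᵐ p ∂μ, ∃ φ : Γ → Γ,
      (∀ n, ∀ x ∈ Xn n {a : Γ | p.1 a = true} {b : Γ | p.2 b = true}, φ x = x * g n) ∧
      (⋃ n, Xn n {a : Γ | p.1 a = true} {b : Γ | p.2 b = true}) = {a : Γ | p.1 a = true} ∧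
      Set.BijOn φ {a : Γ | p.1 a = true} {b : Γ | p.2 b = true} := by
  have hX : IsGreedyMatching g Xn := hXn
  have hT (γ : Γ) : MeasurePreserving (diagShift γ) μ μ := ⟨measurable_diagShift γ, hinv γ⟩
  have hleft := measure_eq_measure_one_of_preimage_eq hT hX.preimage_diagShift_unmatchedLeft
    hX.measurableSet_unmatchedLeft
  have hright := measure_eq_measure_one_of_preimage_eq hT hX.preimage_diagShift_unmatchedRight
    hX.measurableSet_unmatchedRight
  have hsame := hX.measure_unmatchedLeft_one_eq μ hT heq
  have hmeas : MeasurableSet (⋃ γ, unmatchedLeft Xn γ) := .iUnion hX.measurableSet_unmatchedLeft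
  have hnull : μ (unmatchedLeft Xn 1) = 0 := by
    rcases herg _ hmeas (preimage_iUnion_eq_of_preimage_eq hX.preimage_diagShift_unmatchedLeft)
      with h | h
    · exact measure_mono_null (Set.subset_iUnion _ 1) h
    · rw [hsame]
      refine measure_mono_null ((Set.subset_iUnion _ 1).trans
        (hX.disjoint_iUnion_unmatched hg.2).subset_compl_left) ?_
      exact (prob_compl_eq_zero_iff hmeas).2 h
  have hae : ∀ᵐ p ∂μ, ∀ γ, p ∉ unmatchedLeft Xn γ ∧ p ∉ unmatchedRight g Xn γ :=
    ae_all_iff.2 fun γ => (measure_eq_zero_iff_ae_notMem.1 (by rw [hleft, hnull])).and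
      (measure_eq_zero_iff_ae_notMem.1 (by rw [hright, ← hsame, hnull]))
  filter_upwards [hae] with p hp
  refine hX.exists_bijOn (fun a ha => ?_) (fun b hb => ?_) <;> by_contra! h
  · exact (hp a).1 ⟨ha, Set.mem_iInter.2 h⟩
  · exact (hp b).2 ⟨hb, Set.mem_iInter.2 h⟩

/-- For an ergodic invariant probability measure `μ` on `2^Γ × 2^Γ` with
almost surely infinite coordinates and equal density of the identity in both coordinates,
the canonically defined map `φ^{A,B}` (sending `γ ∈ X_n^{A,B}` to `γ·γ_n`) is almost
surely a bijection from `A` onto `B`. -/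
theorem stmt_3 {Γ : Type*} [Group Γ] [Countable Γ] [Infinite Γ]
    (g : ℕ → Γ) (hg : Function.Bijective g)
    (Xn : ℕ → Set Γ → Set Γ → Set Γ)
    (hXn : ∀ (n : ℕ) (A B : Set Γ), Xn n A B =
      (A \ ⋃ m < n, Xn m A B) ∩
        ((fun x => x * (g n)⁻¹) '' (B \ ⋃ m < n, (fun x => x * g m) '' Xn m A B)))
    (μ : Measure ((Γ → Bool) × (Γ → Bool)))
    [IsProbabilityMeasure μ]
    (hinv : ∀ γ : Γ, Measure.map
      (fun p : (Γ → Bool) × (Γ → Bool) =>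
        ((fun a => p.1 (γ⁻¹ * a)), fun b => p.2 (γ⁻¹ * b))) μ = μ)
    (herg : ∀ s : Set ((Γ → Bool) × (Γ → Bool)), MeasurableSet s →
      (∀ γ : Γ, (fun p : (Γ → Bool) × (Γ → Bool) =>
        ((fun a => p.1 (γ⁻¹ * a)), fun b => p.2 (γ⁻¹ * b))) ⁻¹' s = s) →
      μ s = 0 ∨ μ s = 1)
    (hinf : ∀ᵐ p ∂μ, {a : Γ | p.1 a = true}.Infinite ∧ {b : Γ | p.2 b = true}.Infinite)
    (heq : μ {p | p.1 1 = true} = μ {p | p.2 1 = true}) :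
    ∀ᵐ p ∂μ, ∃ φ : Γ → Γ,
      (∀ n, ∀ x ∈ Xn n {a : Γ | p.1 a = true} {b : Γ | p.2 b = true}, φ x = x * g n) ∧
      (⋃ n, Xn n {a : Γ | p.1 a = true} {b : Γ | p.2 b = true}) = {a : Γ | p.1 a = true} ∧
      Set.BijOn φ {a : Γ | p.1 a = true} {b : Γ | p.2 b = true} :=
  stmt_3_general g hg Xn hXn μ hinv herg heq
end

section
/- Let Γ be a countably infinite group, let [Γ]² denote the set of unordered pairs of distinct elements of Γ (with Γ acting by γ·{x,y} = {γx, γy}), fix 0 < p < 1, and let μ be the product Bernoulli(p) measure on 2^([Γ]²), i.e. the law of the random subset R ⊆ [Γ]² obtained by including each pair independently with probability p. Then there is no Γ-invariant Borel probability measure ν on 2^([Γ]²) × 2^Γ (diagonal action) whose pushforward to the first coordinate is μ and such that for ν-almost every (R, T), T is an infinite subset of Γ that is homogeneous for the partition (R, [Γ]² \ R), i.e. either every unordered pair of distinct elements of T belongs to R or no such pair does. -/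
/-!
Fix a colour `b` and, for finite `S ⊆ Γ`, let `f S` be the `ν`-measure of the event that `T ⊇ S`
and `T` is `b`-homogeneous. Invariance of `ν` makes `f` invariant under left translation of `S`,
and since `T` is almost surely nonempty, `f {γ} > 0` for some `b` and `γ`. If `f S = c > 0`, then
among `⌈2 / c⌉` pairwise disjoint translates of `S` two must overlap substantially (Bonferroni),
which produces `S'` of size `2 |S|` with `f S' ≥ c² / 9`. Iterating, there are sets `S` of size
`2ⁿ` with `f S ≥ r ^ |S|` for a fixed `r > 0`. On the other hand every pair inside such an `S`
must have colour `b`, so `f S ≤ β ^ (|S| choose 2)` with `β = p` or `1 - p`, which decays much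
faster.
-/

open MeasureTheory

/-- The set `[Γ]²` of unordered pairs of distinct elements of `Γ`. -/
abbrev OffDiagPair (Γ : Type*) := {e : Sym2 Γ // ¬ e.IsDiag}

/-- The unordered pair `{x, y}` for `x ≠ y`. -/
def pairMk {Γ : Type*} (x y : Γ) (h : x ≠ y) : OffDiagPair Γ :=
  ⟨s(x, y), by simpa [Sym2.mk_isDiag_iff] using h⟩

/-- The action of `Γ` on `[Γ]²` induced by left translation: `γ·{x,y} = {γx, γy}`. -/
def pairAct {Γ : Type*} [Group Γ] (γ : Γ) (e : OffDiagPair Γ) : OffDiagPair Γ :=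
  ⟨e.1.map (fun x => γ * x), by
    rw [Sym2.isDiag_map (mul_right_injective γ)]; exact e.2⟩

open Finset
open scoped ENNReal NNReal Pointwise

theorem MeasureTheory.sum_measure_le_measure_biUnion_add_sum_offDiag {Y ι : Type*}
    [MeasurableSpace Y] [DecidableEq ι] (ν : Measure Y) {A : ι → Set Y}
    (hA : ∀ i, MeasurableSet (A i)) (s : Finset ι) :
    ∑ i ∈ s, ν (A i) ≤ ν (⋃ i ∈ s, A i) + ∑ p ∈ s.offDiag, ν (A p.1 ∩ A p.2) := by
  induction s using Finset.induction_on with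
  | empty => simp
  | @insert a s ha ih =>
    set U := ⋃ i ∈ s, A i
    have hU : MeasurableSet U := s.measurableSet_biUnion fun i _ => hA i
    have hunion : ν (⋃ i ∈ insert a s, A i) = ν (A a \ U) + ν U := by
      rw [Finset.set_biUnion_insert, ← Set.sdiff_union_self,
        measure_union Set.disjoint_sdiff_left hU]
    have hinter : ν (A a ∩ U) ≤ ∑ i ∈ s, ν (A a ∩ A i) := by
      rw [Set.inter_iUnion₂]
      exact measure_biUnion_finset_le s _
    have hoffDiag : ∑ p ∈ s.offDiag, ν (A p.1 ∩ A p.2) + ∑ i ∈ s, ν (A a ∩ A i)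
        ≤ ∑ p ∈ (insert a s).offDiag, ν (A p.1 ∩ A p.2) := by
      rw [offDiag_insert ha, sum_union, sum_union, sum_product, sum_singleton]
      · exact le_self_add
      all_goals
        simp only [disjoint_left, mem_union, mem_offDiag, mem_product, mem_singleton]
        grind
    calc ∑ i ∈ insert a s, ν (A i)
        = ν (A a ∩ U) + ν (A a \ U) + ∑ i ∈ s, ν (A i) := by
          rw [sum_insert ha, measure_inter_add_sdiff _ hU]
      _ ≤ ∑ i ∈ s, ν (A a ∩ A i) + ν (A a \ U) +
            (ν U + ∑ p ∈ s.offDiag, ν (A p.1 ∩ A p.2)) := by gcongr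
      _ = ν (A a \ U) + ν U +
            (∑ p ∈ s.offDiag, ν (A p.1 ∩ A p.2) + ∑ i ∈ s, ν (A a ∩ A i)) := by ring
      _ ≤ _ := by rw [hunion]; gcongr

theorem Finset.exists_card_eq_pairwiseDisjoint_smul {Γ : Type*} [Group Γ] [Infinite Γ]
    [DecidableEq Γ] (S : Finset Γ) (N : ℕ) :
    ∃ D : Finset Γ, #D = N ∧ (D : Set Γ).PairwiseDisjoint (· • S) := by
  induction N with
  | zero => exact ⟨∅, rfl, by simp⟩
  | succ N ih =>
    obtain ⟨D, hcard, hD⟩ := ih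
    obtain ⟨δ, hδ⟩ := Infinite.exists_notMem_finset (D ∪ D * S * S⁻¹)
    rw [mem_union, not_or] at hδ
    refine ⟨insert δ D, by rw [card_insert_of_notMem hδ.1, hcard], ?_⟩
    rw [coe_insert]
    refine hD.insert fun d hd _ => disjoint_left.2 fun z hzδ hzd => hδ.2 ?_
    obtain ⟨y, hy, rfl⟩ := mem_smul_finset.1 hzδ
    obtain ⟨x, hx, hxy⟩ := mem_smul_finset.1 hzd
    have : δ = d * x * y⁻¹ := by rw [eq_mul_inv_iff_mul_eq]; exact hxy.symm
    rw [this]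
    exact mul_mem_mul (mul_mem_mul hd hx) (inv_mem_inv hy)

theorem ENNReal.exists_nat_nine_add_sq_lt {c : ℝ≥0∞} (hc0 : c ≠ 0) (hc1 : c ≤ 1) :
    ∃ N : ℕ, 9 + (N * c) ^ 2 < 9 * (N * c) := by
  lift c to ℝ≥0 using ne_top_of_le_ne_top one_ne_top hc1
  have hc0' : (0 : ℝ) < c := NNReal.coe_pos.2 (pos_iff_ne_zero.2 (by exact_mod_cast hc0))
  have hc1' : (c : ℝ) ≤ 1 := by exact_mod_cast hc1
  set N := ⌈2 / (c : ℝ)⌉₊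
  have h2 : 2 ≤ N * (c : ℝ) := (div_le_iff₀ hc0').1 (Nat.le_ceil _)
  have h3 : N * (c : ℝ) < 3 :=
    calc N * (c : ℝ) < (2 / c + 1) * c :=
          mul_lt_mul_of_pos_right (Nat.ceil_lt_add_one (by positivity)) hc0'
      _ = 2 + c := by field_simp
      _ ≤ 3 := by linarith
  refine ⟨N, ?_⟩
  norm_cast
  rw [← NNReal.coe_lt_coe]
  push_cast
  nlinarith

def offDiagPairsIn {Γ : Type*} [DecidableEq Γ] (S : Finset Γ) : Finset (OffDiagPair Γ) :=
  (S.offDiag.image Sym2.mk.uncurry).subtype (¬ ·.IsDiag)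

theorem card_offDiagPairsIn {Γ : Type*} [DecidableEq Γ] (S : Finset Γ) :
    #(offDiagPairsIn S) = (#S).choose 2 := by
  rw [offDiagPairsIn, card_subtype, filter_true_of_mem, Sym2.card_image_offDiag]
  intro e he
  obtain ⟨⟨x, y⟩, hxy, rfl⟩ := mem_image.1 he
  simpa using (mem_offDiag.1 hxy).2.2

theorem exists_eq_pairMk_of_mem_offDiagPairsIn {Γ : Type*} [DecidableEq Γ] {S : Finset Γ}
    {e : OffDiagPair Γ} (he : e ∈ offDiagPairsIn S) :
    ∃ (x y : Γ) (h : x ≠ y), x ∈ S ∧ y ∈ S ∧ e = pairMk x y h := by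
  obtain ⟨⟨x, y⟩, hxy, he⟩ := mem_image.1 (mem_subtype.1 he)
  obtain ⟨hx, hy, hne⟩ := mem_offDiag.1 hxy
  exact ⟨x, y, hne, hx, hy, Subtype.ext he.symm⟩

abbrev Expansion (Γ : Type*) := (OffDiagPair Γ → Bool) × (Γ → Bool)

namespace Expansion

variable {Γ : Type*}

def homogeneous (b : Bool) : Set (Expansion Γ) :=
  {q | ∀ (x y : Γ) (h : x ≠ y), q.2 x = true → q.2 y = true → q.1 (pairMk x y h) = b}

def containing (S : Finset Γ) : Set (Expansion Γ) := {q | ∀ x ∈ S, q.2 x = true}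

theorem measurableSet_homogeneous [Countable Γ] (b : Bool) :
    MeasurableSet (homogeneous (Γ := Γ) b) := by
  unfold homogeneous
  measurability

theorem measurableSet_containing (S : Finset Γ) : MeasurableSet (containing S) := by
  simp only [containing, Set.ofPred_forall]
  exact S.measurableSet_biInter fun x _ => by measurability

theorem containing_union [DecidableEq Γ] (S T : Finset Γ) :
    containing (S ∪ T) = containing S ∩ containing T := by
  ext q
  simp only [containing, mem_union, Set.mem_ofPred_eq, Set.mem_inter_iff]
  grind

theorem measure_homogeneous_inter_containing_le_map_fst [DecidableEq Γ]
    (ν : Measure (Expansion Γ)) (b : Bool) (S : Finset Γ) :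
    ν (homogeneous b ∩ containing S) ≤ ν.map Prod.fst {R | ∀ e ∈ offDiagPairsIn S, R e = b} := by
  refine (measure_mono ?_).trans (Measure.le_map_apply measurable_fst.aemeasurable _)
  rintro q ⟨hhom, hS⟩ e he
  obtain ⟨x, y, h, hx, hy, rfl⟩ := exists_eq_pairMk_of_mem_offDiagPairsIn he
  exact hhom x y h (hS x hx) (hS y hy)

theorem exists_measure_homogeneous_inter_containing_singleton_ne_zero [Countable Γ]
    (ν : Measure (Expansion Γ)) [NeZero ν]
    (hae : ∀ᵐ q ∂ν, (∃ a, q.2 a = true) ∧ (q ∈ homogeneous true ∨ q ∈ homogeneous false)) :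
    ∃ (b : Bool) (γ : Γ), ν (homogeneous b ∩ containing {γ}) ≠ 0 := by
  by_contra! hzero
  have hnull : ∀ᵐ q ∂ν, q ∉ ⋃ (b : Bool) (γ : Γ), homogeneous b ∩ containing {γ} :=
    measure_eq_zero_iff_ae_notMem.1 (measure_iUnion_null fun b => measure_iUnion_null (hzero b))
  obtain ⟨q, ⟨⟨a, ha⟩, hhom⟩, hq⟩ := (hae.and hnull).exists
  obtain ⟨b, hb⟩ : ∃ b, q ∈ homogeneous b := hhom.elim (⟨true, ·⟩) (⟨false, ·⟩)
  exact hq (Set.mem_iUnion₂.2 ⟨b, a, hb, by simpa [containing] using ha⟩)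

variable [Group Γ]

def act (γ : Γ) (q : Expansion Γ) : Expansion Γ :=
  (fun e => q.1 (pairAct γ⁻¹ e), fun a => q.2 (γ⁻¹ * a))

theorem measurable_act (γ : Γ) : Measurable (act γ) := by
  unfold act
  fun_prop

theorem pairAct_pairMk (γ x y : Γ) (h : x ≠ y) :
    pairAct γ (pairMk x y h) = pairMk (γ * x) (γ * y) (mul_left_cancel.mt h) :=
  Subtype.ext (by simp [pairAct, pairMk])

theorem act_preimage_homogeneous (γ : Γ) (b : Bool) :
    act γ ⁻¹' homogeneous b = homogeneous b := by
  ext q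
  simp only [act, homogeneous, Set.mem_preimage, Set.mem_ofPred_eq, pairAct_pairMk]
  constructor
  · intro H x y h hx hy
    simpa using H (γ * x) (γ * y) (mul_left_cancel.mt h) (by simpa using hx) (by simpa using hy)
  · intro H x y h hx hy
    exact H _ _ _ hx hy

theorem act_preimage_containing [DecidableEq Γ] (γ : Γ) (S : Finset Γ) :
    act γ ⁻¹' containing S = containing (γ⁻¹ • S) := by
  ext q
  simp [act, containing, mem_smul_finset]

theorem measure_homogeneous_inter_containing_smul [Countable Γ] [DecidableEq Γ]
    {ν : Measure (Expansion Γ)} (hν : ∀ γ : Γ, ν.map (act γ) = ν) (b : Bool) (δ : Γ)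
    (S : Finset Γ) :
    ν (homogeneous b ∩ containing (δ • S)) = ν (homogeneous b ∩ containing S) := by
  have hpre : act δ⁻¹ ⁻¹' (homogeneous b ∩ containing S) =
      homogeneous b ∩ containing (δ • S) := by
    rw [Set.preimage_inter, act_preimage_homogeneous, act_preimage_containing, inv_inv]
  rw [← hpre, ← Measure.map_apply (measurable_act _)
    ((measurableSet_homogeneous b).inter (measurableSet_containing S)), hν]

end Expansion

section Doubling

variable {Γ Y : Type*} [Group Γ] [Infinite Γ] [DecidableEq Γ] [MeasurableSpace Y]
  (ν : Measure Y) [IsProbabilityMeasure ν] {A : Finset Γ → Set Y}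

/-- Among `⌈2 / c⌉` pairwise disjoint translates of `S`, each of measure `c = ν (A S)`,
Bonferroni's inequality forces two to meet in measure at least `c² / 9`; `S'` is their union. -/
theorem exists_card_eq_two_mul_sq_le (hA : ∀ S, MeasurableSet (A S))
    (hunion : ∀ S T, A (S ∪ T) = A S ∩ A T) (hsmul : ∀ (δ : Γ) S, ν (A (δ • S)) = ν (A S))
    (S : Finset Γ) : ∃ S' : Finset Γ, #S' = 2 * #S ∧ ν (A S) ^ 2 ≤ 9 * ν (A S') := by
  set c := ν (A S)
  by_cases hc0 : c = 0
  · obtain ⟨D, hD2, hD⟩ := exists_card_eq_pairwiseDisjoint_smul S 2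
    obtain ⟨x, y, hxy, rfl⟩ := card_eq_two.1 hD2
    refine ⟨x • S ∪ y • S, ?_, by simp [hc0]⟩
    rw [card_union_of_disjoint (hD (by simp) (by simp) hxy), card_smul_finset,
      card_smul_finset, two_mul]
  by_contra! h
  obtain ⟨N, hN⟩ := ENNReal.exists_nat_nine_add_sq_lt hc0 prob_le_one
  obtain ⟨D, hDcard, hD⟩ := exists_card_eq_pairwiseDisjoint_smul S N
  have hpair : ∀ p ∈ D.offDiag, 9 * ν (A (p.1 • S) ∩ A (p.2 • S)) ≤ c ^ 2 := by
    rintro ⟨δ, δ'⟩ hp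
    rw [mem_offDiag] at hp
    rw [← hunion]
    refine (h _ ?_).le
    rw [card_union_of_disjoint (hD hp.1 hp.2.1 hp.2.2), card_smul_finset,
      card_smul_finset, two_mul]
  have hbon := sum_measure_le_measure_biUnion_add_sum_offDiag ν (fun δ => hA (δ • S)) D
  simp only [hsmul, sum_const, hDcard, nsmul_eq_mul] at hbon
  have : 9 * (N * c) ≤ 9 + (N * c) ^ 2 :=
    calc 9 * (N * c) ≤ 9 * (1 + ∑ p ∈ D.offDiag, ν (A (p.1 • S) ∩ A (p.2 • S))) := by
          gcongr
          exact hbon.trans (by gcongr; exact prob_le_one)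
      _ = 9 + ∑ p ∈ D.offDiag, 9 * ν (A (p.1 • S) ∩ A (p.2 • S)) := by
          rw [mul_add, mul_one, mul_sum]
      _ ≤ 9 + #D.offDiag * c ^ 2 := by
          grw [sum_le_sum hpair, sum_const, nsmul_eq_mul]
      _ ≤ 9 + (N * c) ^ 2 := by
          rw [mul_pow, offDiag_card, hDcard]
          gcongr
          exact_mod_cast (Nat.sub_le _ _).trans (sq N).ge
  exact (hN.trans_le this).false

theorem exists_card_eq_two_pow_mul_div_pow_le (hA : ∀ S, MeasurableSet (A S))
    (hunion : ∀ S T, A (S ∪ T) = A S ∩ A T) (hsmul : ∀ (δ : Γ) S, ν (A (δ • S)) = ν (A S))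
    (S : Finset Γ) (n : ℕ) :
    ∃ S' : Finset Γ, #S' = 2 ^ n * #S ∧ (ν (A S) / 9) ^ 2 ^ n ≤ ν (A S') / 9 := by
  induction n with
  | zero => exact ⟨S, by simp, by simp⟩
  | succ n ih =>
    obtain ⟨S₁, hS₁, hle₁⟩ := ih
    obtain ⟨S₂, hS₂, hle₂⟩ := exists_card_eq_two_mul_sq_le ν hA hunion hsmul S₁
    refine ⟨S₂, by rw [hS₂, hS₁]; ring, ?_⟩
    calc (ν (A S) / 9) ^ 2 ^ (n + 1) = ((ν (A S) / 9) ^ 2 ^ n) ^ 2 := by rw [pow_succ, pow_mul]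
      _ ≤ (ν (A S₁) / 9) ^ 2 := by gcongr
      _ = ν (A S₁) ^ 2 / 9 / 9 := by simp only [div_eq_mul_inv]; ring
      _ ≤ 9 * ν (A S₂) / 9 / 9 := by gcongr
      _ = ν (A S₂) / 9 := by
          rw [mul_comm, ENNReal.mul_div_cancel_right (by norm_num) (by norm_num)]

end Doubling

theorem ENNReal.exists_pow_choose_two_lt {β r : ℝ≥0∞} (hβ : β < 1) (hr : r ≠ 0) :
    ∃ n : ℕ, β ^ (2 ^ n).choose 2 < r ^ 2 ^ n := by
  obtain ⟨k, hk⟩ : ∃ k : ℕ, β ^ k < r :=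
    ((ENNReal.tendsto_pow_atTop_nhds_zero_of_lt_one hβ).eventually
      (gt_mem_nhds (pos_iff_ne_zero.2 hr))).exists
  refine ⟨2 * k + 1, ?_⟩
  have hexp : k * 2 ^ (2 * k + 1) ≤ (2 ^ (2 * k + 1)).choose 2 := by
    have := Nat.lt_two_pow_self (n := 2 * k + 1)
    rw [Nat.choose_two_right, Nat.le_div_iff_mul_le two_pos]
    calc k * 2 ^ (2 * k + 1) * 2 = 2 ^ (2 * k + 1) * (2 * k) := by ring
      _ ≤ 2 ^ (2 * k + 1) * (2 ^ (2 * k + 1) - 1) := Nat.mul_le_mul_left _ (by omega)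
  calc β ^ (2 ^ (2 * k + 1)).choose 2 ≤ β ^ (k * 2 ^ (2 * k + 1)) :=
        pow_le_pow_right_of_le_one' hβ.le hexp
    _ = (β ^ k) ^ 2 ^ (2 * k + 1) := pow_mul _ _ _
    _ < r ^ 2 ^ (2 * k + 1) := (ENNReal.pow_lt_pow_left_iff (by positivity)).2 hk

theorem stmt_5_general {Γ : Type*} [Group Γ] [Countable Γ] [Infinite Γ]
    (p : ENNReal) (hp0 : 0 < p) (hp1 : p < 1)
    (μ : Measure (OffDiagPair Γ → Bool))
    (hμ : ∀ (F : Finset (OffDiagPair Γ)) (f : OffDiagPair Γ → Bool),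
      μ {R | ∀ e ∈ F, R e = f e} = ∏ e ∈ F, (if f e then p else 1 - p)) :
    ¬ ∃ ν : Measure ((OffDiagPair Γ → Bool) × (Γ → Bool)),
      IsProbabilityMeasure ν ∧
      (∀ γ : Γ, Measure.map
        (fun q : (OffDiagPair Γ → Bool) × (Γ → Bool) =>
          ((fun e => q.1 (pairAct γ⁻¹ e)), fun a => q.2 (γ⁻¹ * a))) ν = ν) ∧
      Measure.map Prod.fst ν = μ ∧
      (∀ᵐ q ∂ν, {a : Γ | q.2 a = true}.Infinite ∧
        ((∀ (x y : Γ) (h : x ≠ y), q.2 x = true → q.2 y = true →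
            q.1 (pairMk x y h) = true) ∨
         (∀ (x y : Γ) (h : x ≠ y), q.2 x = true → q.2 y = true →
            q.1 (pairMk x y h) = false))) := by
  classical
  rintro ⟨ν, hν, hinv, hfst, hae⟩
  obtain ⟨b, γ, hpos⟩ :=
    Expansion.exists_measure_homogeneous_inter_containing_singleton_ne_zero ν
      (hae.mono fun q hq => ⟨hq.1.nonempty, hq.2⟩)
  have hβ : (if b then p else 1 - p) < 1 := by
    cases b
    · simpa using ENNReal.sub_lt_self ENNReal.one_ne_top one_ne_zero hp0.ne'
    · simpa using hp1
  obtain ⟨n, hn⟩ := ENNReal.exists_pow_choose_two_lt hβ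
    (ENNReal.div_ne_zero.2 ⟨hpos, ENNReal.ofNat_ne_top (n := 9)⟩)
  obtain ⟨S, hS, hlow⟩ := exists_card_eq_two_pow_mul_div_pow_le ν
    (A := fun S => Expansion.homogeneous b ∩ Expansion.containing S)
    (fun S =>
      (Expansion.measurableSet_homogeneous b).inter (Expansion.measurableSet_containing S))
    (fun S T => by rw [Expansion.containing_union, Set.inter_inter_distrib_left])
    (Expansion.measure_homogeneous_inter_containing_smul hinv b) {γ} n
  have hupp := Expansion.measure_homogeneous_inter_containing_le_map_fst ν b S
  have hμS := hμ (offDiagPairsIn S) fun _ => b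
  rw [prod_const, card_offDiagPairsIn, hS, card_singleton, mul_one] at hμS
  rw [hfst, hμS] at hupp
  exact (hn.trans_le (hlow.trans
    ((ENNReal.div_le_of_le_mul (le_mul_of_one_le_right' (by norm_num))).trans hupp))).false

/-- The Bernoulli(p) random partition of `[Γ]²` admits no invariant random
expansion by an infinite homogeneous set: there is no Γ-invariant probability measure on
`2^([Γ]²) × 2^Γ` projecting to the Bernoulli measure whose second coordinate is almost
surely an infinite homogeneous set for the partition. -/
theorem stmt_5 {Γ : Type*} [Group Γ] [Countable Γ] [Infinite Γ]
    (p : ENNReal) (hp0 : 0 < p) (hp1 : p < 1)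
    (μ : Measure (OffDiagPair Γ → Bool)) [IsProbabilityMeasure μ]
    (hμ : ∀ (F : Finset (OffDiagPair Γ)) (f : OffDiagPair Γ → Bool),
      μ {R | ∀ e ∈ F, R e = f e} = ∏ e ∈ F, (if f e then p else 1 - p)) :
    ¬ ∃ ν : Measure ((OffDiagPair Γ → Bool) × (Γ → Bool)),
      IsProbabilityMeasure ν ∧
      (∀ γ : Γ, Measure.map
        (fun q : (OffDiagPair Γ → Bool) × (Γ → Bool) =>
          ((fun e => q.1 (pairAct γ⁻¹ e)), fun a => q.2 (γ⁻¹ * a))) ν = ν) ∧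
      Measure.map Prod.fst ν = μ ∧
      (∀ᵐ q ∂ν, {a : Γ | q.2 a = true}.Infinite ∧
        ((∀ (x y : Γ) (h : x ≠ y), q.2 x = true → q.2 y = true →
            q.1 (pairMk x y h) = true) ∨
         (∀ (x y : Γ) (h : x ≠ y), q.2 x = true → q.2 y = true →
            q.1 (pairMk x y h) = false))) :=
  stmt_5_general p hp0 hp1 μ hμ
end

section
/- Let Γ be a countably infinite group and let [Γ]² denote the set of unordered pairs of distinct elements of Γ, with Γ acting on 2^([Γ]²) by γ·{x,y} = {γx, γy} on pairs. Then there do not exist a comeagre Γ-invariant Borel set X ⊆ 2^([Γ]²) and a Borel Γ-equivariant map f : X → 2^Γ such that for every R ∈ X, f(R) is an infinite subset of Γ homogeneous for the partition (R, [Γ]² \ R), i.e. either every unordered pair of distinct elements of f(R) belongs to R or no such pair does. -/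
/-!
If such `X` and `f` existed, some piece
`A = {R ∈ X | R gives colour b to every pair from f R, and a ∈ f R}` would be non-meagre, hence,
having the Baire property, comeagre in a basic cylinder `N` fixing the colours of a finite set `s`
of pairs. Choose `γ` moving the finitely many vertices of `s`, together with `a`, off themselves.
By equivariance the translate `γ • A`, whose members have `γa ∈ f R`, is comeagre in the cylinder
`γ • N`, whose support `γ • s` is disjoint from `s`. A generic `R` in `N ∩ γ • N` therefore has
`a, γa ∈ f R`, which forces `R {a, γa} = b`. But the pair `{a, γa}` lies outside both supports,
so flipping its colour is a homeomorphism preserving `N ∩ γ • N`, and the flipped `R` is generic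
as well: a contradiction.
-/

open Set Function Filter Topology
open scoped Pointwise

theorem exists_not_isMeagre_of_subset_iUnion {Y ι : Type*} [TopologicalSpace Y] [BaireSpace Y]
    [Nonempty Y] [Countable ι] {X : Set Y} {A : ι → Set Y} (hX : IsMeagre Xᶜ)
    (hXA : X ⊆ ⋃ i, A i) : ∃ i, ¬ IsMeagre (A i) := by
  by_contra! h
  refine not_isMeagre_of_isOpen isOpen_univ univ_nonempty ((hX.union (isMeagre_iUnion h)).mono ?_)
  intro y _
  by_cases hy : y ∈ X
  exacts [Or.inr (hXA hy), Or.inl hy]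

theorem exists_mem_and_apply_mem_of_isMeagre_diff {X : Type*} [TopologicalSpace X] [BaireSpace X]
    {U C : Set X} (hU : IsOpen U) (hne : U.Nonempty) (hC : IsMeagre (U \ C)) (φ : X ≃ₜ X)
    (hφ : MapsTo φ U U) : ∃ x ∈ C, φ x ∈ C := by
  have hbad : IsMeagre ((U \ C) ∪ φ ⁻¹' (U \ C)) :=
    hC.union (hC.preimage_of_isOpenMap φ.continuous φ.isOpenMap)
  obtain ⟨x, hxU, hx⟩ := not_subset.1 fun h => not_isMeagre_of_isOpen hU hne (hbad.mono h)
  simp only [mem_union, Set.mem_sdiff, mem_preimage, not_or, not_and, not_not] at hx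
  exact ⟨x, hx.1 hxU, hx.2 (hφ hxU)⟩

section Cylinder

variable {I J α : Type*}

def cyl (s : Set I) (x : I → α) : Set (I → α) := s.pi fun i => {x i}

@[simp]
lemma mem_cyl {s : Set I} {x y : I → α} : y ∈ cyl s x ↔ EqOn y x s := Iff.rfl

lemma self_mem_cyl (s : Set I) (x : I → α) : x ∈ cyl s x := fun _ _ => rfl

lemma cyl_inter_cyl {s t : Set I} [DecidablePred (· ∈ s)] (h : Disjoint s t) (x y : I → α) :
    cyl s x ∩ cyl t y = cyl (s ∪ t) (s.piecewise x y) := by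
  have hx : EqOn (s.piecewise x y) x s := s.piecewise_eqOn x y
  have hy : EqOn (s.piecewise x y) y t := (s.piecewise_eqOn_compl x y).mono h.subset_compl_left
  ext R
  simp only [mem_inter_iff, mem_cyl, eqOn_union]
  exact and_congr ⟨fun h => h.trans hx.symm, fun h => h.trans hx⟩
    ⟨fun h => h.trans hy.symm, fun h => h.trans hy⟩

lemma preimage_comp_cyl (σ : I ≃ J) (s : Set I) (x : I → α) :
    (fun R : J → α => R ∘ σ) ⁻¹' cyl s x = cyl (σ '' s) (x ∘ σ.symm) := by
  ext R
  simp only [mem_preimage, mem_cyl, EqOn, comp_apply, forall_mem_image, σ.symm_apply_apply]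

lemma IsMeagre.cyl_diff_preimage_comp [TopologicalSpace α] {s : Set I} {x : I → α}
    {A : Set (I → α)} (h : IsMeagre (cyl s x \ A)) (σ : I ≃ J) :
    IsMeagre (cyl (σ '' s) (x ∘ σ.symm) \ (fun R : J → α => R ∘ σ) ⁻¹' A) := by
  rw [← preimage_comp_cyl, ← preimage_sdiff]
  exact h.preimage_of_isOpenMap (Homeomorph.piCongrLeft σ).symm.continuous
    (Homeomorph.piCongrLeft σ).symm.isOpenMap

variable [TopologicalSpace α]

lemma IsOpen.exists_cyl_subset {U : Set (I → α)} (hU : IsOpen U) {x : I → α} (hx : x ∈ U) :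
    ∃ s : Set I, s.Finite ∧ cyl s x ⊆ U := by
  obtain ⟨F, u, hu, hFU⟩ := isOpen_pi_iff.1 hU x hx
  exact ⟨F, F.finite_toSet, fun y hy => hFU fun i hi => (hy i hi : y i = x i) ▸ (hu i hi).2⟩

lemma isOpen_cyl [DiscreteTopology α] {s : Set I} (hs : s.Finite) (x : I → α) : IsOpen (cyl s x) :=
  isOpen_set_pi hs fun _ _ => isOpen_discrete _

lemma BaireMeasurableSet.exists_isMeagre_cyl_diff {B : Set (I → α)} (hB : BaireMeasurableSet B)
    (hB' : ¬ IsMeagre B) : ∃ (s : Set I) (x : I → α), s.Finite ∧ IsMeagre (cyl s x \ B) := by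
  obtain ⟨U, hU, hBU⟩ := hB.residualEq_isOpen
  have hdiff : IsMeagre {z | ¬ (z ∈ B ↔ z ∈ U)} :=
    mem_of_superset (eventuallyEq_set.1 hBU) fun z hz hz' => hz' hz
  obtain ⟨x, hx⟩ : U.Nonempty := by
    refine nonempty_iff_ne_empty.2 fun hU₀ => hB' (hdiff.mono fun z hz => ?_)
    simp [hU₀, hz]
  obtain ⟨s, hs, hsU⟩ := hU.exists_cyl_subset hx
  exact ⟨s, x, hs, hdiff.mono fun z hz => by simp [hsU hz.1, hz.2]⟩

end Cylinder

section Flip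

variable {I : Type*} [DecidableEq I]

def flipAt (i : I) : (I → Bool) ≃ₜ (I → Bool) where
  toFun R := update R i (!R i)
  invFun R := update R i (!R i)
  left_inv R := by simp
  right_inv R := by simp
  continuous_toFun := by fun_prop
  continuous_invFun := by fun_prop

@[simp]
lemma flipAt_apply_self (i : I) (R : I → Bool) : flipAt i R i = !R i := by simp [flipAt]

lemma mapsTo_flipAt_cyl {s : Set I} {i : I} (hi : i ∉ s) (x : I → Bool) :
    MapsTo (flipAt i) (cyl s x) (cyl s x) := fun R hR j hj => by
  simp [flipAt, ne_of_mem_of_not_mem hj hi, mem_cyl.1 hR hj]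

end Flip

theorem exists_mem_apply_ne_of_isMeagre_cyl_diff {I : Type*} [Countable I] {s : Set I}
    (hs : s.Finite) {i : I} (hi : i ∉ s) {x : I → Bool} {C : Set (I → Bool)}
    (hC : IsMeagre (cyl s x \ C)) (b : Bool) : ∃ R ∈ C, R i ≠ b := by
  classical
  obtain ⟨R, hR, hR'⟩ := exists_mem_and_apply_mem_of_isMeagre_diff (isOpen_cyl hs x)
    ⟨x, self_mem_cyl s x⟩ hC (flipAt i) (mapsTo_flipAt_cyl hi x)
  by_cases hRb : R i = b
  · exact ⟨_, hR', by simp [hRb]⟩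
  · exact ⟨R, hR, hRb⟩

theorem exists_mem_inter_apply_ne_of_isMeagre_cyl_diff {I : Type*} [Countable I] {s t : Set I}
    (hs : s.Finite) (ht : t.Finite) (hst : Disjoint s t) {i : I} (hi : i ∉ s ∪ t)
    {x y : I → Bool} {A B : Set (I → Bool)} (hA : IsMeagre (cyl s x \ A))
    (hB : IsMeagre (cyl t y \ B)) (b : Bool) : ∃ R ∈ A ∩ B, R i ≠ b := by
  classical
  refine exists_mem_apply_ne_of_isMeagre_cyl_diff (x := s.piecewise x y) (hs.union ht) hi
    ((hA.union hB).mono ?_) b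
  rw [← cyl_inter_cyl hst]
  rintro R ⟨⟨hRs, hRt⟩, hR⟩
  by_cases hRA : R ∈ A
  · exact Or.inr ⟨hRt, fun hRB => hR ⟨hRA, hRB⟩⟩
  · exact Or.inl ⟨hRs, hRA⟩

section Pairs

variable {Γ : Type*}

def pairsIn (D : Set Γ) : Set (OffDiagPair Γ) := {e | ∀ v ∈ e.1, v ∈ D}

lemma pairMk_mem_pairsIn {D : Set Γ} {x y : Γ} (h : x ≠ y) :
    pairMk x y h ∈ pairsIn D ↔ x ∈ D ∧ y ∈ D := by
  simp [pairsIn, pairMk, Sym2.mem_iff]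

lemma Disjoint.pairsIn {D E : Set Γ} (h : Disjoint D E) : Disjoint (pairsIn D) (pairsIn E) :=
  disjoint_left.2 fun e hD hE => disjoint_left.1 h (hD _ e.1.out_fst_mem) (hE _ e.1.out_fst_mem)

lemma Set.Finite.exists_subset_pairsIn {s : Set (OffDiagPair Γ)} (hs : s.Finite) (a : Γ) :
    ∃ D : Set Γ, D.Finite ∧ a ∈ D ∧ s ⊆ pairsIn D := by
  classical
  refine ⟨insert a (⋃ e ∈ s, (e.1.toFinset : Set Γ)),
    (hs.biUnion fun e _ => e.1.toFinset.finite_toSet).insert a, mem_insert a _,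
    fun e he v hv => mem_insert_of_mem a (mem_biUnion he (by simpa using hv))⟩

variable [Group Γ]

instance : MulAction Γ (OffDiagPair Γ) where
  smul := pairAct
  one_smul e := Subtype.ext <| show (pairAct 1 e).1 = e.1 by simp [pairAct]
  mul_smul γ δ e := Subtype.ext <| show (pairAct (γ * δ) e).1 = (pairAct γ (pairAct δ e)).1 by
    simp [pairAct, Sym2.map_map, mul_assoc]

@[simp]
lemma pairAct_eq_smul (γ : Γ) (e : OffDiagPair Γ) : pairAct γ e = γ • e := rfl

lemma smul_pairMk (γ x y : Γ) (h : x ≠ y) :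
    γ • pairMk x y h = pairMk (γ * x) (γ * y) (mul_left_cancel.mt h) :=
  Subtype.ext <| Sym2.map_mk _ x y

lemma mem_smul_pair {γ v : Γ} {e : OffDiagPair Γ} : v ∈ (γ • e).1 ↔ γ⁻¹ * v ∈ e.1 := by
  change v ∈ e.1.map (γ * ·) ↔ _
  rw [Sym2.mem_map]
  exact ⟨by rintro ⟨w, hw, rfl⟩; rwa [inv_mul_cancel_left],
    fun h => ⟨_, h, mul_inv_cancel_left γ v⟩⟩

lemma smul_mem_pairsIn_smul {D : Set Γ} {e : OffDiagPair Γ} (γ : Γ) (he : e ∈ pairsIn D) :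
    γ • e ∈ pairsIn (γ • D) := fun _ hv =>
  mem_smul_set_iff_inv_smul_mem.2 (he _ (mem_smul_pair.1 hv))

lemma Set.Finite.exists_disjoint_smul [Infinite Γ] {D : Set Γ} (hD : D.Finite) :
    ∃ γ : Γ, Disjoint (γ • D) D := by
  obtain ⟨γ, hγ⟩ := (hD.mul hD.inv).infinite_compl.nonempty
  refine ⟨γ, disjoint_left.2 ?_⟩
  rintro _ ⟨d, hd, rfl⟩ hd'
  exact hγ ⟨γ * d, hd', d⁻¹, inv_mem_inv.2 hd, mul_inv_cancel_right γ d⟩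

variable {D : Set Γ} {s : Set (OffDiagPair Γ)} {γ : Γ}

lemma disjoint_smul_of_subset_pairsIn (hs : s ⊆ pairsIn D) (hγ : Disjoint (γ • D) D) :
    Disjoint s (γ • s) := by
  refine disjoint_left.2 fun e he he' => ?_
  obtain ⟨e', he', rfl⟩ := he'
  exact disjoint_right.1 hγ.pairsIn (hs he) (smul_mem_pairsIn_smul γ (hs he'))

lemma pairMk_notMem_union_smul (hs : s ⊆ pairsIn D) (hγ : Disjoint (γ • D) D) {a : Γ}
    (ha : a ∈ D) (h : a ≠ γ * a) : pairMk a (γ * a) h ∉ s ∪ γ • s := by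
  have hγa : γ * a ∈ γ • D := smul_mem_smul_set ha
  rintro (he | ⟨e, he, he'⟩)
  · exact disjoint_left.1 hγ hγa ((pairMk_mem_pairsIn h).1 (hs he)).2
  · have := smul_mem_pairsIn_smul γ (hs he)
    rw [show γ • e = _ from he', pairMk_mem_pairsIn] at this
    exact disjoint_left.1 hγ this.1 ha

end Pairs

lemma ne_mul_of_disjoint_smul {Γ : Type*} [Group Γ] {D : Set Γ} {γ a : Γ}
    (hγ : Disjoint (γ • D) D) (ha : a ∈ D) : a ≠ γ * a := fun h =>
  disjoint_left.1 hγ (smul_mem_smul_set ha) (by rwa [smul_eq_mul, ← h])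

section Homogeneous

variable {Γ : Type*}

def IsHomogeneous (R : OffDiagPair Γ → Bool) (H : Γ → Bool) (b : Bool) : Prop :=
  ∀ (x y : Γ) (h : x ≠ y), H x = true → H y = true → R (pairMk x y h) = b

def homogeneousPiece (X : Set (OffDiagPair Γ → Bool)) (f : (OffDiagPair Γ → Bool) → Γ → Bool)
    (b : Bool) (a : Γ) : Set (OffDiagPair Γ → Bool) :=
  {R | R ∈ X ∧ IsHomogeneous R (f R) b ∧ f R a = true}

variable {X : Set (OffDiagPair Γ → Bool)} {f : (OffDiagPair Γ → Bool) → Γ → Bool}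

lemma measurableSet_homogeneousPiece [Countable Γ] (hX : MeasurableSet X) (hf : Measurable f)
    (b : Bool) (a : Γ) : MeasurableSet (homogeneousPiece X f b a) := by
  simp only [homogeneousPiece, IsHomogeneous]
  exact measurableSet_setOfPred.2 (by fun_prop)

variable [Group Γ]

lemma IsHomogeneous.smul {R : OffDiagPair Γ → Bool} {H : Γ → Bool} {b : Bool}
    (h : IsHomogeneous R H b) (γ : Γ) :
    IsHomogeneous (fun e => R (γ⁻¹ • e)) (fun c => H (γ⁻¹ * c)) b := fun x y hxy hx hy => by
  simpa [smul_pairMk] using h _ _ _ hx hy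

lemma smul_mem_homogeneousPiece
    (hX : ∀ γ : Γ, ∀ R ∈ X, (fun e => R (γ⁻¹ • e)) ∈ X)
    (hf : ∀ γ : Γ, ∀ R ∈ X, f (fun e => R (γ⁻¹ • e)) = fun c => f R (γ⁻¹ * c))
    {b : Bool} {a : Γ} {R : OffDiagPair Γ → Bool} (hR : R ∈ homogeneousPiece X f b a) (γ : Γ) :
    (fun e => R (γ⁻¹ • e)) ∈ homogeneousPiece X f b (γ * a) := by
  obtain ⟨hRX, hhom, ha⟩ := hR
  refine ⟨hX γ R hRX, ?_, ?_⟩ <;> rw [hf γ R hRX]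
  · exact hhom.smul γ
  · simpa using ha

end Homogeneous

/-- There is no comeagre Γ-invariant Borel set `X ⊆ 2^([Γ]²)` together with
a Borel Γ-equivariant map `f : X → 2^Γ` selecting an infinite homogeneous set for every
partition in `X`. -/
theorem stmt_6 {Γ : Type*} [Group Γ] [Countable Γ] [Infinite Γ] :
    ¬ ∃ (X : Set (OffDiagPair Γ → Bool)) (f : (OffDiagPair Γ → Bool) → (Γ → Bool)),
      MeasurableSet X ∧ IsMeagre Xᶜ ∧
      (∀ γ : Γ, ∀ R ∈ X, (fun e => R (pairAct γ⁻¹ e)) ∈ X) ∧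
      Measurable f ∧
      (∀ γ : Γ, ∀ R ∈ X,
        f (fun e => R (pairAct γ⁻¹ e)) = fun a => f R (γ⁻¹ * a)) ∧
      ∀ R ∈ X, {a : Γ | f R a = true}.Infinite ∧
        ((∀ (x y : Γ) (h : x ≠ y), f R x = true → f R y = true →
            R (pairMk x y h) = true) ∨
         (∀ (x y : Γ) (h : x ≠ y), f R x = true → f R y = true →
            R (pairMk x y h) = false)) := by
  classical
  rintro ⟨X, f, hXm, hXcom, hXinv, hfm, hfeq, hsel⟩
  obtain ⟨⟨b, a⟩, hba⟩ := exists_not_isMeagre_of_subset_iUnion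
      (A := fun p : Bool × Γ => homogeneousPiece X f p.1 p.2) hXcom fun R hR => by
    obtain ⟨a, ha⟩ := (hsel R hR).1.nonempty
    rcases (hsel R hR).2 with hb | hb
    exacts [mem_iUnion.2 ⟨(true, a), hR, hb, ha⟩, mem_iUnion.2 ⟨(false, a), hR, hb, ha⟩]
  obtain ⟨s, x, hs, hsA⟩ :=
    (measurableSet_homogeneousPiece hXm hfm b a).baireMeasurableSet.exists_isMeagre_cyl_diff hba
  obtain ⟨D, hD, haD, hsD⟩ := hs.exists_subset_pairsIn a
  obtain ⟨γ, hγ⟩ := hD.exists_disjoint_smul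
  have hne := ne_mul_of_disjoint_smul hγ haD
  obtain ⟨R, ⟨hR, hR'⟩, hRb⟩ := exists_mem_inter_apply_ne_of_isMeagre_cyl_diff hs (hs.image _)
    (disjoint_smul_of_subset_pairsIn hsD hγ) (pairMk_notMem_union_smul hsD hγ haD hne) hsA
    (hsA.cyl_diff_preimage_comp (MulAction.toPerm γ)) b
  have hRγ := smul_mem_homogeneousPiece hXinv hfeq hR' γ
  simp only [comp_apply, MulAction.toPerm_apply, smul_inv_smul] at hRγ
  exact hRb (hR.2.1 a (γ * a) hne hR.2.2 hRγ.2.2)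
end

section
/- Let Γ be a countably infinite group and let PO(Γ) ⊆ 2^(Γ×Γ) be the (closed) set of partial orders on Γ, i.e. reflexive, antisymmetric, transitive binary relations, equipped with the logic action of Γ. Then there do not exist a Γ-invariant Borel set X ⊆ PO(Γ) that is comeagre in PO(Γ) (in the subspace topology) and a Borel Γ-equivariant map f : X → 2^(Γ×Γ) such that for every P ∈ X, f(P) is a linear order on Γ (a total partial order) containing P. -/
/-- The logic action of `Γ` on binary relations on `Γ` (coded as points of `2^(Γ×Γ)`):
`(γ·R)(x,y) ⇔ R(γ⁻¹x, γ⁻¹y)`. -/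
def logicAct {Γ : Type*} [Group Γ] (γ : Γ) (R : Γ × Γ → Bool) : Γ × Γ → Bool :=
  fun q => R (γ⁻¹ * q.1, γ⁻¹ * q.2)

/-- `R` codes a partial order on `Γ`: reflexive, antisymmetric and transitive. -/
def IsPartialOrderRel {Γ : Type*} (R : Γ × Γ → Bool) : Prop :=
  (∀ x, R (x, x) = true) ∧
  (∀ x y, R (x, y) = true → R (y, x) = true → x = y) ∧
  (∀ x y z, R (x, y) = true → R (y, z) = true → R (x, z) = true)

/-!
Fix `a ≠ b`. The Borel set `S` of those `P ∈ X` in which `a` and `b` are incomparable but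
`a < b` in `f P` is meagre: otherwise it is comeagre in a basic open set, fixed by the
restriction of some `P₀ ∈ S` to a finite `D ∋ a, b`. Choose `γ` with `γD ∩ D = ∅` and glue
`P₀|D` to its translate `γ·(P₀|D)`, adding `b < γa` and `γb < a`; this is consistent because
`a ≰ b` in `P₀`. A generic `P` extending the glued order has `P ∈ S` and `γ⁻¹·P ∈ S`, so by
equivariance `f P` contains the cycle `a < b < γa < γb < a`. As `f` is total, `S` together with
the set obtained by swapping `a` and `b` covers the nonmeagre open set of partial orders in `X`
in which `a` and `b` are incomparable, a contradiction.
-/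

open Function Set Filter Topology

section Relations

variable {α β : Type*}

open Classical in
lemma isPartialOrderRel_diagonal : IsPartialOrderRel fun q : α × α => decide (q.1 = q.2) := by
  refine ⟨?_, ?_, ?_⟩ <;> intros <;> simp_all

lemma IsPartialOrderRel.comp_prodMap {R : β × β → Bool} (hR : IsPartialOrderRel R)
    {e : α → β} (he : Injective e) : IsPartialOrderRel (R ∘ Prod.map e e) :=
  ⟨fun x => hR.1 (e x), fun _ _ h₁ h₂ => he (hR.2.1 _ _ h₁ h₂),
    fun _ _ _ h₁ h₂ => hR.2.2 _ _ _ h₁ h₂⟩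

/-- Two copies of `P`, where across the copies `(i, x) ≤ (j, y)` iff `x ≤ b` and `a ≤ y`. -/
def glue (P : α × α → Bool) (a b : α) : (Bool × α) × (Bool × α) → Bool :=
  fun q => if q.1.1 = q.2.1 then P (q.1.2, q.2.2) else P (q.1.2, b) && P (a, q.2.2)

lemma IsPartialOrderRel.glue {P : α × α → Bool} (hP : IsPartialOrderRel P) {a b : α}
    (hab : P (a, b) = false) : IsPartialOrderRel (glue P a b) := by
  obtain ⟨hrefl, hanti, htrans⟩ := hP
  -- a cycle through both copies would give `a ≤ x ≤ b`
  have hgap : ∀ x, P (a, x) = true → P (x, b) = true → False := fun x h₁ h₂ => by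
    simp [htrans _ _ _ h₁ h₂] at hab
  refine ⟨fun p => by simp [_root_.glue, hrefl], fun ⟨i, x⟩ ⟨j, y⟩ h₁ h₂ => ?_,
    fun ⟨i, x⟩ ⟨j, y⟩ ⟨k, z⟩ h₁ h₂ => ?_⟩
  · cases i <;> cases j <;> simp_all [_root_.glue] <;> grind
  · cases i <;> cases j <;> cases k <;> simp_all [_root_.glue] <;> grind

open Classical in
noncomputable def pushRel (R : β × β → Bool) (e : β → α) : α × α → Bool :=
  fun q => decide (q.1 = q.2 ∨ ∃ u v, e u = q.1 ∧ e v = q.2 ∧ R (u, v) = true)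

lemma IsPartialOrderRel.pushRel {R : β × β → Bool} (hR : IsPartialOrderRel R) {e : β → α}
    (he : Injective e) : IsPartialOrderRel (pushRel R e) := by
  refine ⟨fun x => by simp [_root_.pushRel], fun x y h₁ h₂ => ?_, fun x y z h₁ h₂ => ?_⟩
  · simp only [_root_.pushRel, decide_eq_true_eq] at h₁ h₂
    rcases h₁ with rfl | ⟨u, v, rfl, rfl, huv⟩
    · rfl
    rcases h₂ with h | ⟨v', u', hv, hu, hvu⟩
    · exact h.symm
    cases he hu; cases he hv
    rw [hR.2.1 u v huv hvu]
  · simp only [_root_.pushRel, decide_eq_true_eq] at h₁ h₂ ⊢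
    rcases h₁ with rfl | ⟨u, v, rfl, rfl, huv⟩
    · exact h₂
    rcases h₂ with rfl | ⟨v', w, hv, rfl, hvw⟩
    · exact Or.inr ⟨u, v, rfl, rfl, huv⟩
    cases he hv
    exact Or.inr ⟨u, w, rfl, rfl, hR.2.2 _ _ _ huv hvw⟩

lemma pushRel_apply_apply {R : β × β → Bool} (hR : ∀ u, R (u, u) = true) {e : β → α}
    (he : Injective e) (u v : β) : pushRel R e (e u, e v) = R (u, v) := by
  by_cases huv : u = v
  · subst huv; simp [pushRel, hR]
  · simp [pushRel, he.eq_iff, huv]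

end Relations

section Topology

variable {α : Type*}

lemma isClosed_setOf_apply₃ (p q r : α) (C : Bool → Bool → Bool → Prop) :
    IsClosed {R : α → Bool | C (R p) (R q) (R r)} :=
  (isClosed_discrete {t : Bool × Bool × Bool | C t.1 t.2.1 t.2.2}).preimage
    (f := fun R : α → Bool => (R p, R q, R r)) (by fun_prop)

lemma isClosed_setOf_isPartialOrderRel : IsClosed {R : α × α → Bool | IsPartialOrderRel R} := by
  simp only [IsPartialOrderRel, ofPred_and, ofPred_forall]
  refine .inter (isClosed_iInter fun x => ?_) (.inter (isClosed_iInter fun x =>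
    isClosed_iInter fun y => ?_) (isClosed_iInter fun x => isClosed_iInter fun y =>
      isClosed_iInter fun z => ?_))
  · exact isClosed_setOf_apply₃ (x, x) (x, x) (x, x) fun u _ _ => u = true
  · exact isClosed_setOf_apply₃ (x, y) (y, x) (x, x) fun u v _ => u = true → v = true → x = y
  · exact isClosed_setOf_apply₃ (x, y) (y, z) (x, z) fun u v w => u = true → v = true → w = true

end Topology

abbrev PartialOrders (α : Type*) := {R : α × α → Bool // IsPartialOrderRel R}

instance {α : Type*} : CompactSpace (PartialOrders α) :=
  isCompact_iff_compactSpace.mp isClosed_setOf_isPartialOrderRel.isCompact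

section AgreeOn

variable {α : Type*}

def agreeOn (R : α × α → Bool) (D : Finset α) : Set (α × α → Bool) :=
  {R' | ∀ x ∈ D, ∀ y ∈ D, R' (x, y) = R (x, y)}

lemma mem_agreeOn_self (R : α × α → Bool) (D : Finset α) : R ∈ agreeOn R D :=
  fun _ _ _ _ => rfl

lemma agreeOn_anti {R : α × α → Bool} {D D' : Finset α} (h : D ⊆ D') :
    agreeOn R D' ⊆ agreeOn R D :=
  fun _ hR' x hx y hy => hR' x (h hx) y (h hy)

lemma isOpen_agreeOn (R : α × α → Bool) (D : Finset α) : IsOpen (agreeOn R D) := by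
  have : agreeOn R D = ⋂ x ∈ D, ⋂ y ∈ D, (fun R' => R' (x, y)) ⁻¹' {R (x, y)} := by
    ext; simp [agreeOn]
  rw [this]
  exact isOpen_biInter_finset fun x _ => isOpen_biInter_finset fun y _ =>
    (isOpen_discrete _).preimage (continuous_apply _)

lemma exists_agreeOn_subset {U : Set (α × α → Bool)} (hU : IsOpen U) {R : α × α → Bool}
    (hR : R ∈ U) : ∃ D : Finset α, agreeOn R D ⊆ U := by
  classical
  obtain ⟨I, u, hu, hIu⟩ := isOpen_pi_iff.mp hU R hR
  refine ⟨I.image Prod.fst ∪ I.image Prod.snd, fun R' hR' => hIu fun q hq => ?_⟩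
  have hq' : q ∈ I := hq
  rw [show R' q = R q from hR' q.1 (Finset.mem_union_left _ (Finset.mem_image_of_mem _ hq'))
    q.2 (Finset.mem_union_right _ (Finset.mem_image_of_mem _ hq'))]
  exact (hu q hq').2

end AgreeOn

section Baire

variable {X Y : Type*} [TopologicalSpace X]

lemma MeasurableSet.baireMeasurableSet_preimage [TopologicalSpace Y] [m : MeasurableSpace Y]
    (hm : m ≤ borel Y) {g : X → Y} (hg : Continuous g) {s : Set Y} (hs : MeasurableSet s) :
    BaireMeasurableSet (g ⁻¹' s) := by
  borelize X
  exact (hg.borel_measurable (hm s hs)).baireMeasurableSet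

lemma BaireMeasurableSet.exists_isOpen_diff_isMeagre {s : Set X} (hs : BaireMeasurableSet s)
    (hs' : ¬ IsMeagre s) : ∃ V, IsOpen V ∧ (V ∩ s).Nonempty ∧ IsMeagre (V \ s) := by
  obtain ⟨V, hV, hsV⟩ := hs.residualEq_isOpen
  have hVs : IsMeagre (V \ s) := by
    filter_upwards [hsV.mem_iff] with x hx
    simp [hx]
  have hsV : IsMeagre (s \ V) := by
    filter_upwards [hsV.mem_iff] with x hx
    simp [hx]
  refine ⟨V, hV, not_not.mp fun h => hs' (IsMeagre.mono ?_ hsV), hVs⟩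
  exact fun x hx => ⟨hx, fun hxV => h ⟨x, hxV, hx⟩⟩

lemma IsOpen.nonempty_diff_of_isMeagre [BaireSpace X] {W M : Set X} (hW : IsOpen W)
    (hne : W.Nonempty) (hM : IsMeagre M) : (W \ M).Nonempty :=
  (dense_of_mem_residual hM).inter_open_nonempty W hW hne

end Baire

section LogicAct

variable {Γ : Type*} [Group Γ]

lemma logicAct_logicAct_inv (γ : Γ) (R : Γ × Γ → Bool) : logicAct γ (logicAct γ⁻¹ R) = R := by
  funext q; simp [logicAct]

lemma logicAct_inv_logicAct (γ : Γ) (R : Γ × Γ → Bool) : logicAct γ⁻¹ (logicAct γ R) = R := by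
  funext q; simp [logicAct]

lemma IsPartialOrderRel.logicAct {R : Γ × Γ → Bool} (hR : IsPartialOrderRel R) (γ : Γ) :
    IsPartialOrderRel (_root_.logicAct γ R) :=
  hR.comp_prodMap (mul_right_injective γ⁻¹)

@[fun_prop]
lemma continuous_logicAct (γ : Γ) : Continuous (logicAct γ) :=
  continuous_pi fun _ => continuous_apply _

def logicActHomeomorph (γ : Γ) : PartialOrders Γ ≃ₜ PartialOrders Γ where
  toFun P := ⟨logicAct γ P, P.2.logicAct γ⟩
  invFun P := ⟨logicAct γ⁻¹ P, P.2.logicAct γ⁻¹⟩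
  left_inv P := Subtype.ext (logicAct_inv_logicAct γ P)
  right_inv P := Subtype.ext (logicAct_logicAct_inv γ P)
  continuous_toFun := by fun_prop
  continuous_invFun := by fun_prop

open Pointwise in
lemma exists_mul_notMem [Infinite Γ] (D : Finset Γ) : ∃ γ : Γ, ∀ x ∈ D, γ * x ∉ D := by
  classical
  obtain ⟨γ, hγ⟩ := Infinite.exists_notMem_finset (D * D⁻¹)
  refine ⟨γ, fun x hx hγx => hγ ?_⟩
  simpa using Finset.mul_mem_mul hγx (Finset.inv_mem_inv hx)

lemma exists_amalgam {P : Γ × Γ → Bool} (hP : IsPartialOrderRel P) {D : Finset Γ} {a b γ : Γ}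
    (ha : a ∈ D) (hb : b ∈ D) (hab : P (a, b) = false) (hγ : ∀ x ∈ D, γ * x ∉ D) :
    ∃ R, IsPartialOrderRel R ∧
      (∀ x ∈ D, ∀ y ∈ D, R (x, y) = P (x, y) ∧ R (γ * x, γ * y) = P (x, y)) ∧
      R (b, γ * a) = true ∧ R (γ * b, a) = true := by
  let e : Bool × D → Γ := fun p => cond p.1 (γ * p.2) p.2
  have he : Injective e := by
    rintro ⟨_ | _, x, hx⟩ ⟨_ | _, y, hy⟩ h <;> simp only [e, cond] at h
    · simp [h]
    · exact absurd (h ▸ hx) (hγ y hy)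
    · exact absurd (h ▸ hy) (hγ x hx)
    · simp [mul_left_cancel h]
  let Q := glue (P ∘ Prod.map (↑) (↑)) (⟨a, ha⟩ : D) ⟨b, hb⟩
  have hQ : IsPartialOrderRel Q := (hP.comp_prodMap Subtype.val_injective).glue hab
  have hR (p q : Bool × D) : pushRel Q e (e p, e q) = Q (p, q) := pushRel_apply_apply hQ.1 he p q
  refine ⟨pushRel Q e, hQ.pushRel he, fun x hx y hy => ⟨?_, ?_⟩, ?_, ?_⟩
  · simpa [Q, e, glue] using hR (false, ⟨x, hx⟩) (false, ⟨y, hy⟩)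
  · simpa [Q, e, glue] using hR (true, ⟨x, hx⟩) (true, ⟨y, hy⟩)
  · simpa [Q, e, glue, hP.1] using hR (false, ⟨b, hb⟩) (true, ⟨a, ha⟩)
  · simpa [Q, e, glue, hP.1] using hR (true, ⟨b, hb⟩) (false, ⟨a, ha⟩)

end LogicAct

section Main

variable {Γ : Type*} [Group Γ]

lemma exists_isOpen_forall_agreeOn_logicAct [Infinite Γ] {P : Γ × Γ → Bool}
    (hP : IsPartialOrderRel P) {D : Finset Γ} {a b : Γ} (ha : a ∈ D) (hb : b ∈ D)
    (hab : P (a, b) = false) :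
    ∃ (γ : Γ) (W : Set (PartialOrders Γ)), IsOpen W ∧ W.Nonempty ∧ ∀ Q ∈ W,
      Q.1 ∈ agreeOn P D ∧ logicAct γ⁻¹ Q.1 ∈ agreeOn P D ∧
      Q.1 (b, γ * a) = true ∧ Q.1 (γ * b, a) = true := by
  classical
  obtain ⟨γ, hγ⟩ := exists_mul_notMem D
  obtain ⟨R, hR, hRD, hRba, hRab⟩ := exists_amalgam hP ha hb hab hγ
  have hD : ∀ x ∈ D, x ∈ D ∪ D.image (γ * ·) := fun x hx => Finset.mem_union_left _ hx
  have hγD : ∀ x ∈ D, γ * x ∈ D ∪ D.image (γ * ·) := fun x hx =>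
    Finset.mem_union_right _ (Finset.mem_image_of_mem _ hx)
  refine ⟨γ, Subtype.val ⁻¹' agreeOn R (D ∪ D.image (γ * ·)),
    (isOpen_agreeOn _ _).preimage continuous_subtype_val, ⟨⟨R, hR⟩, mem_agreeOn_self _ _⟩,
    fun Q hQ => ⟨fun x hx y hy => ?_, fun x hx y hy => ?_, ?_, ?_⟩⟩
  · rw [hQ x (hD x hx) y (hD y hy), (hRD x hx y hy).1]
  · simp only [logicAct, inv_inv]
    rw [hQ _ (hγD x hx) _ (hγD y hy), (hRD x hx y hy).2]
  · rw [hQ _ (hD b hb) _ (hγD a ha), hRba]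
  · rw [hQ _ (hγD b hb) _ (hD a ha), hRab]

lemma isMeagre_setOf_apply_eq_true_and_apply_eq_false [Infinite Γ] {X : Set (Γ × Γ → Bool)}
    {f : (Γ × Γ → Bool) → (Γ × Γ → Bool)} (hX : MeasurableSet X) (hf : Measurable f)
    (hequiv : ∀ γ : Γ, ∀ R ∈ X, f (logicAct γ R) = logicAct γ (f R))
    (hext : ∀ R ∈ X, IsPartialOrderRel (f R) ∧ ∀ q : Γ × Γ, R q = true → f R q = true)
    (a b : Γ) :
    IsMeagre {P : PartialOrders Γ | P.1 ∈ X ∧ f P.1 (a, b) = true ∧ P.1 (a, b) = false} := by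
  classical
  set S := {P : PartialOrders Γ | P.1 ∈ X ∧ f P.1 (a, b) = true ∧ P.1 (a, b) = false}
  have hSB : BaireMeasurableSet S :=
    MeasurableSet.baireMeasurableSet_preimage pi_le_borel_pi continuous_subtype_val
      (s := X ∩ (f ⁻¹' {R | R (a, b) = true} ∩ {R | R (a, b) = false}))
      (hX.inter ((hf (measurable_pi_apply _ (measurableSet_singleton _))).inter
        (measurable_pi_apply _ (measurableSet_singleton _))))
  by_contra hS
  obtain ⟨V, hV, ⟨P₀, hP₀V, -, -, hP₀ab⟩, hVS⟩ := hSB.exists_isOpen_diff_isMeagre hS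
  obtain ⟨U, hU, rfl⟩ := isOpen_induced_iff.mp hV
  obtain ⟨D, hD⟩ := exists_agreeOn_subset hU hP₀V
  obtain ⟨γ, W, hW, hWne, hWD⟩ := exists_isOpen_forall_agreeOn_logicAct P₀.2
    (D := insert a (insert b D)) (by simp) (by simp) hP₀ab
  have hDsub : D ⊆ insert a (insert b D) := fun x hx => by simp [hx]
  let τ := logicActHomeomorph (γ⁻¹ : Γ)
  obtain ⟨Q, hQW, hQ⟩ := hW.nonempty_diff_of_isMeagre hWne
    (hVS.union (hVS.preimage_of_isOpenMap τ.continuous τ.isOpenMap))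
  obtain ⟨hQD, hτQD, hQba, hQab⟩ := hWD Q hQW
  have hQS : Q ∈ S := by_contra fun h => hQ (.inl ⟨hD (agreeOn_anti hDsub hQD), h⟩)
  have hτQS : τ Q ∈ S := by_contra fun h => hQ (.inr ⟨hD (agreeOn_anti hDsub hτQD), h⟩)
  obtain ⟨hQX, hfQab, -⟩ := hQS
  obtain ⟨hτQX, hfτQab, -⟩ := hτQS
  have hfQγ : f Q.1 (γ * a, γ * b) = true := by
    have h := hequiv γ _ hτQX
    rw [show logicAct γ (τ Q).1 = Q.1 from logicAct_logicAct_inv γ Q.1] at h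
    simpa [h, logicAct] using hfτQab
  obtain ⟨⟨-, hanti, htrans⟩, hQf⟩ := hext Q.1 hQX
  have hfQba : f Q.1 (b, a) = true :=
    htrans _ _ _ (htrans _ _ _ (hQf _ hQba) hfQγ) (hQf _ hQab)
  rw [hanti _ _ hfQab hfQba, P₀.2.1] at hP₀ab
  exact Bool.noConfusion hP₀ab

end Main

theorem stmt_7_general {Γ : Type*} [Group Γ] [Infinite Γ] :
    ¬ ∃ (X : Set (Γ × Γ → Bool)) (f : (Γ × Γ → Bool) → (Γ × Γ → Bool)),
      X ⊆ {R | IsPartialOrderRel R} ∧ MeasurableSet X ∧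
      (∀ γ : Γ, ∀ R ∈ X, logicAct γ R ∈ X) ∧
      IsMeagre {R : {R : Γ × Γ → Bool // IsPartialOrderRel R} |
        (R : Γ × Γ → Bool) ∉ X} ∧
      Measurable f ∧
      (∀ γ : Γ, ∀ R ∈ X, f (logicAct γ R) = logicAct γ (f R)) ∧
      ∀ R ∈ X, IsPartialOrderRel (f R) ∧
        (∀ x y : Γ, f R (x, y) = true ∨ f R (y, x) = true) ∧
        ∀ q : Γ × Γ, R q = true → f R q = true := by
  classical
  rintro ⟨X, f, -, hX, -, hXc, hf, hequiv, hlin⟩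
  have hext R (hR : R ∈ X) := And.intro (hlin R hR).1 (hlin R hR).2.2
  have hS := isMeagre_setOf_apply_eq_true_and_apply_eq_false hX hf hequiv hext
  obtain ⟨a, b, hab⟩ := exists_pair_ne Γ
  let Δ : Γ × Γ → Bool := fun q => decide (q.1 = q.2)
  let U : Set (PartialOrders Γ) := Subtype.val ⁻¹' agreeOn Δ {a, b}
  refine not_isMeagre_of_isOpen ((isOpen_agreeOn _ _).preimage continuous_subtype_val)
    ⟨⟨Δ, isPartialOrderRel_diagonal⟩, mem_agreeOn_self _ _⟩
    (((hS a b).union (hS b a)).union hXc |>.mono fun P (hP : P ∈ U) => ?_)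
  have hPab : P.1 (a, b) = false := by simpa [Δ, hab] using hP a (by simp) b (by simp)
  have hPba : P.1 (b, a) = false := by simpa [Δ, hab.symm] using hP b (by simp) a (by simp)
  by_cases hPX : P.1 ∈ X
  · rcases (hlin P.1 hPX).2.1 a b with h | h
    · exact .inl (.inl ⟨hPX, h, hPab⟩)
    · exact .inl (.inr ⟨hPX, h, hPba⟩)
  · exact .inr hPX

/-- There is no Γ-invariant Borel set `X ⊆ PO(Γ)` comeagre in `PO(Γ)`
admitting a Borel Γ-equivariant map assigning to each partial order in `X` a linear
order on `Γ` extending it. -/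
theorem stmt_7 {Γ : Type*} [Group Γ] [Countable Γ] [Infinite Γ] :
    ¬ ∃ (X : Set (Γ × Γ → Bool)) (f : (Γ × Γ → Bool) → (Γ × Γ → Bool)),
      X ⊆ {R | IsPartialOrderRel R} ∧ MeasurableSet X ∧
      (∀ γ : Γ, ∀ R ∈ X, logicAct γ R ∈ X) ∧
      IsMeagre {R : {R : Γ × Γ → Bool // IsPartialOrderRel R} |
        (R : Γ × Γ → Bool) ∉ X} ∧
      Measurable f ∧
      (∀ γ : Γ, ∀ R ∈ X, f (logicAct γ R) = logicAct γ (f R)) ∧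
      ∀ R ∈ X, IsPartialOrderRel (f R) ∧
        (∀ x y : Γ, f R (x, y) = true ∨ f R (y, x) = true) ∧
        ∀ q : Γ × Γ, R q = true → f R q = true :=
  stmt_7_general
end

section
/- Let Γ be a countably infinite group and let ν be a Γ-invariant Borel probability measure on 2^(Γ×Γ) × 2^Γ (Γ acting diagonally, by the logic action on 2^(Γ×Γ) and by left translation on 2^Γ) such that for ν-almost every pair (L, S): L is a linear order on Γ without endpoints and S ⊆ Γ with the restriction of L is order-isomorphic to (ℤ, ≤). Then for ν-almost every (L, S), for all x, y ∈ S the interval {z ∈ Γ : x L z and z L y} is finite. -/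
open MeasureTheory

/-- `R` codes a linear order on `Γ` without endpoints. -/
def IsLinOrderNoEnd {Γ : Type*} (R : Γ × Γ → Bool) : Prop :=
  (∀ x, R (x, x) = true) ∧
  (∀ x y, R (x, y) = true → R (y, x) = true → x = y) ∧
  (∀ x y z, R (x, y) = true → R (y, z) = true → R (x, z) = true) ∧
  (∀ x y, R (x, y) = true ∨ R (y, x) = true) ∧
  (∀ x, ∃ y, y ≠ x ∧ R (x, y) = true) ∧
  (∀ x, ∃ y, y ≠ x ∧ R (y, x) = true)

/-!
Mass transport. Call `[g, g⁺)`, for `g ∈ S` and `g⁺` its `L`-successor in `S`, the gap from `g`.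
Every point of `Γ` lies in at most one gap, so the events `h ∈ gap(g)` for fixed `h` are almost
surely disjoint and `∑_g ν(1 ∈ gap(g)) ≤ 1`. Invariance turns this column sum into the row sum
`∑_h ν(h ∈ gap(g))`, the expected size of the gap from `g`; so almost surely every gap is finite,
and an interval between two points of `S` is covered by finitely many gaps.
-/

section Gaps

open Set

variable {Γ : Type*}

def gapFrom (L : Γ × Γ → Bool) (S : Γ → Bool) (g : Γ) : Set Γ :=
  {h | S g = true ∧ L (g, h) = true ∧
    ∀ s, S s = true → L (g, s) = true → L (s, h) = true → s = g}

theorem disjoint_gapFrom {L : Γ × Γ → Bool} (S : Γ → Bool)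
    (htot : ∀ x y, L (x, y) = true ∨ L (y, x) = true) {g₁ g₂ : Γ} (hne : g₁ ≠ g₂) :
    Disjoint (gapFrom L S g₁) (gapFrom L S g₂) := by
  rw [disjoint_left]
  rintro h ⟨hS₁, hL₁, hmin₁⟩ ⟨hS₂, hL₂, hmin₂⟩
  rcases htot g₁ g₂ with h₁₂ | h₂₁
  · exact hne (hmin₁ g₂ hS₂ h₁₂ hL₂).symm
  · exact hne (hmin₂ g₁ hS₁ h₂₁ hL₁)

theorem setOf_between_subset_biUnion_gapFrom {L : Γ × Γ → Bool} {S : Γ → Bool} {e : ℤ → Γ}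
    (htrans : ∀ x y z, L (x, y) = true → L (y, z) = true → L (x, z) = true)
    (hmem : ∀ n, S (e n) = true) (hsurj : ∀ a, S a = true → ∃ n, e n = a)
    (hmono : ∀ m n, m ≤ n ↔ L (e m, e n) = true) (m n : ℤ) :
    {z | L (e m, z) = true ∧ L (z, e n) = true} ⊆ ⋃ k ∈ Finset.Icc m n, gapFrom L S (e k) := by
  rintro z ⟨hmz, hzn⟩
  obtain ⟨k, hkz, hk_max⟩ : ∃ k, L (e k, z) = true ∧ ∀ j, L (e j, z) = true → j ≤ k :=
    Int.exists_greatest_of_bdd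
      ⟨n, fun j hj => (hmono j n).mpr (htrans _ _ _ hj hzn)⟩ ⟨m, hmz⟩
  refine mem_biUnion (Finset.mem_Icc.mpr ⟨hk_max m hmz, (hmono k n).mpr (htrans _ _ _ hkz hzn)⟩)
    ⟨hmem k, hkz, fun s hs hks hsz => ?_⟩
  obtain ⟨j, rfl⟩ := hsurj s hs
  rw [le_antisymm (hk_max j hsz) ((hmono k j).mpr hks)]

theorem tsum_eq_tsum_of_mul_left_invariant [Group Γ] {M : Type*} [AddCommMonoid M]
    [TopologicalSpace M] {f : Γ → Γ → M} (hf : ∀ γ g h, f (γ * g) (γ * h) = f g h) (g h : Γ) :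
    ∑' k, f g k = ∑' k, f k h := by
  calc ∑' k, f g k = ∑' k, f 1 (g⁻¹ * k) := tsum_congr fun k => by rw [← hf g⁻¹, inv_mul_cancel]
    _ = ∑' k, f 1 k := (Equiv.mulLeft g⁻¹).tsum_eq (f 1)
    _ = ∑' k, f 1 (k⁻¹ * h) := (((Equiv.inv Γ).trans (Equiv.mulRight h)).tsum_eq (f 1)).symm
    _ = ∑' k, f k h := tsum_congr fun k => by rw [← hf k, mul_inv_cancel_left, mul_one]

theorem measurableSet_setOf_mem_gapFrom [Countable Γ] (g h : Γ) :
    MeasurableSet {p : (Γ × Γ → Bool) × (Γ → Bool) | h ∈ gapFrom p.1 p.2 g} := by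
  unfold gapFrom
  measurability

theorem mem_gapFrom_translate [Group Γ] (L : Γ × Γ → Bool) (S : Γ → Bool) (γ g h : Γ) :
    γ * h ∈ gapFrom (logicAct γ L) (fun a => S (γ⁻¹ * a)) (γ * g) ↔ h ∈ gapFrom L S g := by
  simp only [gapFrom, logicAct, mem_ofPred_eq, inv_mul_cancel_left]
  refine and_congr_right fun _ => and_congr_right fun _ =>
    ((Equiv.mulLeft γ⁻¹).forall_congr fun {s} => ?_)
  simp [inv_mul_eq_iff_eq_mul]

theorem ae_finite_gapFrom [Group Γ] [Countable Γ] (ν : Measure ((Γ × Γ → Bool) × (Γ → Bool)))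
    [IsFiniteMeasure ν]
    (hinv : ∀ γ : Γ, Measure.map
      (fun p : (Γ × Γ → Bool) × (Γ → Bool) =>
        (logicAct γ p.1, fun a => p.2 (γ⁻¹ * a))) ν = ν)
    (htot : ∀ᵐ p ∂ν, ∀ x y, p.1 (x, y) = true ∨ p.1 (y, x) = true) :
    ∀ᵐ p ∂ν, ∀ g, (gapFrom p.1 p.2 g).Finite := by
  set E : Γ → Γ → Set ((Γ × Γ → Bool) × (Γ → Bool)) := fun g h => {p | h ∈ gapFrom p.1 p.2 g}
  have hE_inv : ∀ γ g h, ν (E (γ * g) (γ * h)) = ν (E g h) := by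
    intro γ g h
    conv_lhs => rw [← hinv γ]
    rw [Measure.map_apply (by unfold logicAct; fun_prop) (measurableSet_setOf_mem_gapFrom _ _)]
    exact congrArg ν (ext fun p => mem_gapFrom_translate p.1 p.2 γ g h)
  have hcol : ∑' g, ν (E g 1) ≤ ν univ :=
    tsum_measure_le_measure_univ (fun g => (measurableSet_setOf_mem_gapFrom g 1).nullMeasurableSet)
      fun g₁ g₂ hne => measure_mono_null
        (fun p hp htotp => disjoint_left.mp (disjoint_gapFrom p.2 htotp hne) hp.1 hp.2)
        (ae_iff.mp htot)
  refine ae_all_iff.mpr fun g => ae_finite_setOfPred_mem (s := E g) ?_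
  rw [tsum_eq_tsum_of_mul_left_invariant (f := fun g h => ν (E g h)) hE_inv g 1]
  exact (hcol.trans_lt (measure_lt_top ν univ)).ne

end Gaps

theorem stmt_14_general {Γ : Type*} [Group Γ] [Countable Γ]
    (ν : Measure ((Γ × Γ → Bool) × (Γ → Bool))) [IsProbabilityMeasure ν]
    (hinv : ∀ γ : Γ, Measure.map
      (fun p : (Γ × Γ → Bool) × (Γ → Bool) =>
        (logicAct γ p.1, fun a => p.2 (γ⁻¹ * a))) ν = ν)
    (hae : ∀ᵐ p ∂ν, IsLinOrderNoEnd p.1 ∧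
      ∃ e : ℤ → Γ,
        (∀ n : ℤ, p.2 (e n) = true) ∧
        (∀ a : Γ, p.2 a = true → ∃ n : ℤ, e n = a) ∧
        (∀ m n : ℤ, m ≤ n ↔ p.1 (e m, e n) = true)) :
    ∀ᵐ p ∂ν, ∀ x y : Γ, p.2 x = true → p.2 y = true →
      {z : Γ | p.1 (x, z) = true ∧ p.1 (z, y) = true}.Finite := by
  have hgaps := ae_finite_gapFrom ν hinv (hae.mono fun p hp => hp.1.2.2.2.1)
  filter_upwards [hae, hgaps] with p hp hfin x y hx hy
  obtain ⟨⟨-, -, htrans, -⟩, e, hmem, hsurj, hmono⟩ := hp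
  obtain ⟨m, rfl⟩ := hsurj x hx
  obtain ⟨n, rfl⟩ := hsurj y hy
  exact ((Finset.Icc m n).finite_toSet.biUnion fun k _ => hfin (e k)).subset
    (setOf_between_subset_biUnion_gapFrom htrans hmem hsurj hmono m n)

/-- If `ν` is a Γ-invariant probability measure on pairs `(L, S)` where
`L` is almost surely a linear order on `Γ` without endpoints and `S` is almost surely a
subset of order type `ℤ`, then almost surely every interval between two points of `S`
is finite. -/
theorem stmt_14 {Γ : Type*} [Group Γ] [Countable Γ] [Infinite Γ]
    (ν : Measure ((Γ × Γ → Bool) × (Γ → Bool))) [IsProbabilityMeasure ν]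
    (hinv : ∀ γ : Γ, Measure.map
      (fun p : (Γ × Γ → Bool) × (Γ → Bool) =>
        (logicAct γ p.1, fun a => p.2 (γ⁻¹ * a))) ν = ν)
    (hae : ∀ᵐ p ∂ν, IsLinOrderNoEnd p.1 ∧
      ∃ e : ℤ → Γ,
        (∀ n : ℤ, p.2 (e n) = true) ∧
        (∀ a : Γ, p.2 a = true → ∃ n : ℤ, e n = a) ∧
        (∀ m n : ℤ, m ≤ n ↔ p.1 (e m, e n) = true)) :
    ∀ᵐ p ∂ν, ∀ x y : Γ, p.2 x = true → p.2 y = true →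
      {z : Γ | p.1 (x, z) = true ∧ p.1 (z, y) = true}.Finite :=
  stmt_14_general ν hinv hae
end

section
/- Let Γ be a countably infinite group and let μ be a symmetric probability measure on Γ (μ({γ}) = μ({γ⁻¹}) for all γ) whose support generates Γ. Define the two-sided random walk started at the identity e as the map Γ^ℕ × Γ^ℕ → Γ^ℤ sending (ξ, η) to (Z_n)_{n∈ℤ} where Z_0 = e, Z_{n+1} = Z_n·ξ_n for n ≥ 0, and Z_{-(n+1)} = Z_{-n}·η_n for n ≥ 0; let P̂ be the pushforward of the product measure μ^ℕ × μ^ℕ under this map. Let ER(Γ) ⊆ 2^(Γ×Γ) be the set of equivalence relations on Γ, let ν be a Γ-invariant Borel probability measure on ER(Γ), and let λ = ν × P̂ on ER(Γ) × Γ^ℤ, where Γ acts diagonally (by the logic action on ER(Γ) and coordinatewise by left multiplication on Γ^ℤ). Let S : ER(Γ) × Γ^ℤ → ER(Γ) × Γ^ℤ be the shift S(E, (Z_n)_{n∈ℤ}) = (E, (Z_{n+1})_{n∈ℤ}). Then λ(S(A)) = λ(A) for every Γ-invariant Borel set A ⊆ ER(Γ) × Γ^ℤ. -/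
/-!
Write `λ` as the image of `ν ⊗ κ ⊗ κ` under `(E, ξ, η) ↦ (E, Z(ξ, η))`. Re-indexing the walk by
`n ↦ Z_{n-1}` and translating it by `η₀⁻¹` gives again a walk from the identity, with forward
increments `(η₀⁻¹, ξ₀, ξ₁, …)` and backward increments `(η₁, η₂, …)`. As `A` is invariant, that
translation (applied to `E` as well) is invisible to `A`, so it suffices that the recentring map
`(E, ξ, η) ↦ (η₀⁻¹ · E, (η₀⁻¹, ξ₀, ξ₁, …), (η₁, η₂, …))` preserves `ν ⊗ κ ⊗ κ`. It does: `η₀` is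
independent of the other coordinates, `η₀⁻¹` has law `μ` by symmetry, `ν` is invariant under each
fixed translation, and prepending an independent `μ`-distributed letter to a `κ`-distributed
sequence gives a `κ`-distributed sequence.
-/

open MeasureTheory

/-- `R` codes an equivalence relation on `Γ`. -/
def IsEquivRel {Γ : Type*} (R : Γ × Γ → Bool) : Prop :=
  (∀ x, R (x, x) = true) ∧
  (∀ x y, R (x, y) = true → R (y, x) = true) ∧
  (∀ x y z, R (x, y) = true → R (y, z) = true → R (x, z) = true)

/-- Partial products of an increment sequence: `fwd ξ 0 = 1`,
`fwd ξ (n+1) = fwd ξ n * ξ n`. -/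
def fwd {Γ : Type*} [Group Γ] (ξ : ℕ → Γ) : ℕ → Γ
  | 0 => 1
  | n + 1 => fwd ξ n * ξ n

/-- The two-sided random walk started at the identity with forward increments `ξ`
and backward increments `η`: `Z_0 = 1`, `Z_{n+1} = Z_n · ξ_n`,
`Z_{-(n+1)} = Z_{-n} · η_n`. -/
def twoSided {Γ : Type*} [Group Γ] (ξ η : ℕ → Γ) (n : ℤ) : Γ :=
  if 0 ≤ n then fwd ξ n.toNat else fwd η (-n).toNat

lemma MeasureTheory.MeasurePreserving.fiberwise {X Y : Type*} [MeasurableSpace X]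
    [MeasurableSpace Y] {ν : Measure X} {ρ : Measure Y} [SFinite ν] [SFinite ρ]
    {f : Y → X → X} (hf : Measurable (Function.uncurry f))
    (hfν : ∀ y, Measure.map (f y) ν = ν) :
    MeasurePreserving (fun p : X × Y => (f p.2 p.1, p.2)) (ν.prod ρ) (ν.prod ρ) :=
  Measure.measurePreserving_swap.comp <|
    ((MeasurePreserving.id ρ).skew_product hf (ae_of_all _ hfν)).comp
      Measure.measurePreserving_swap

lemma image_shift_eq_preimage {α β : Type*} (A : Set (α × (ℤ → β))) :
    (fun p : α × (ℤ → β) => (p.1, fun n => p.2 (n + 1))) '' A =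
      (fun p : α × (ℤ → β) => (p.1, fun n => p.2 (n - 1))) ⁻¹' A :=
  congrFun (Set.image_eq_preimage_of_inverse
    (g := fun p : α × (ℤ → β) => (p.1, fun n => p.2 (n - 1)))
    (fun p => by simp) (fun p => by simp)) A

section Sequences

variable {Γ : Type*}

def seqCons (g : Γ) (ξ : ℕ → Γ) : ℕ → Γ
  | 0 => g
  | n + 1 => ξ n

def prefixCylinder (w : ℕ → Γ) (N : ℕ) : Set (ℕ → Γ) :=
  {ξ | ∀ n < N, ξ n = w n}

@[simp]
lemma prefixCylinder_zero (w : ℕ → Γ) : prefixCylinder w 0 = Set.univ := by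
  simp [prefixCylinder]

lemma prefixCylinder_eq_of_mem {w ξ : ℕ → Γ} {N : ℕ} (h : ξ ∈ prefixCylinder w N) :
    prefixCylinder w N = prefixCylinder ξ N := by
  ext ζ
  exact forall₂_congr fun n hn => by rw [h n hn]

lemma prefixCylinder_inter_prefixCylinder (ξ : ℕ → Γ) (N M : ℕ) :
    prefixCylinder ξ N ∩ prefixCylinder ξ M = prefixCylinder ξ (max N M) := by
  ext ζ
  simp only [prefixCylinder, Set.mem_inter_iff, Set.mem_ofPred_eq, lt_max_iff]
  exact ⟨fun h n hn => hn.elim (h.1 n) (h.2 n), fun h => ⟨fun n hn => h n (.inl hn),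
    fun n hn => h n (.inr hn)⟩⟩

lemma isPiSystem_prefixCylinder :
    IsPiSystem (Set.range fun p : (ℕ → Γ) × ℕ => prefixCylinder p.1 p.2) := by
  rintro _ ⟨⟨w, N⟩, rfl⟩ _ ⟨⟨u, M⟩, rfl⟩ ⟨ξ, hw, hu⟩
  dsimp only at hw hu ⊢
  rw [prefixCylinder_eq_of_mem hw, prefixCylinder_eq_of_mem hu,
    prefixCylinder_inter_prefixCylinder]
  exact ⟨(ξ, max N M), rfl⟩

lemma seqCons_preimage_prefixCylinder_succ (w : ℕ → Γ) (N : ℕ) :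
    (fun p : Γ × (ℕ → Γ) => seqCons p.1 p.2) ⁻¹' prefixCylinder w (N + 1) =
      {w 0} ×ˢ prefixCylinder (fun n => w (n + 1)) N := by
  ext ⟨g, ξ⟩
  simp only [prefixCylinder, Set.mem_preimage, Set.mem_ofPred_eq, Set.mem_prod,
    Set.mem_singleton_iff, Nat.forall_lt_succ_left]
  rfl

variable [MeasurableSpace Γ]

lemma measurable_seqCons : Measurable fun p : Γ × (ℕ → Γ) => seqCons p.1 p.2 := by
  refine measurable_pi_lambda _ fun n => ?_
  cases n with
  | zero => exact measurable_fst
  | succ n => exact (measurable_pi_apply n).comp measurable_snd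

lemma measurableSet_prefixCylinder [MeasurableSingletonClass Γ] (w : ℕ → Γ) (N : ℕ) :
    MeasurableSet (prefixCylinder w N) := by
  simp only [prefixCylinder, Set.ofPred_forall]
  exact .iInter fun n => .iInter fun _ => measurable_pi_apply n (measurableSet_singleton _)

variable [Countable Γ] [MeasurableSingletonClass Γ]

lemma generateFrom_prefixCylinder :
    MeasurableSpace.generateFrom (Set.range fun p : (ℕ → Γ) × ℕ => prefixCylinder p.1 p.2) =
      MeasurableSpace.pi := by
  refine le_antisymm (MeasurableSpace.generateFrom_le ?_) ?_
  · rintro _ ⟨⟨w, N⟩, rfl⟩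
    exact measurableSet_prefixCylinder w N
  · set C := Set.range fun p : (ℕ → Γ) × ℕ => prefixCylinder p.1 p.2
    have restrict_prefix : ∀ N, Measurable[MeasurableSpace.generateFrom C]
        fun (ξ : ℕ → Γ) (i : Fin N) => ξ i := fun N =>
      @measurable_to_countable _ _ _ _ (.generateFrom C) _ fun ξ =>
        MeasurableSpace.measurableSet_generateFrom
        ⟨(ξ, N), by ext ζ; simp [prefixCylinder, funext_iff, Fin.forall_iff]⟩
    exact iSup_le fun n =>
      ((measurable_pi_apply (Fin.last n)).comp (restrict_prefix (n + 1))).comap_le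

lemma ext_of_prefixCylinder [Nonempty Γ] {κ₁ κ₂ : Measure (ℕ → Γ)} [IsFiniteMeasure κ₁]
    (h : ∀ w N, κ₁ (prefixCylinder w N) = κ₂ (prefixCylinder w N)) : κ₁ = κ₂ := by
  obtain ⟨w₀⟩ : Nonempty (ℕ → Γ) := inferInstance
  refine ext_of_generate_finite _ generateFrom_prefixCylinder.symm isPiSystem_prefixCylinder
    ?_ (by simpa using h w₀ 0)
  rintro _ ⟨⟨w, N⟩, rfl⟩
  exact h w N

end Sequences

section IIDSequences

variable {Γ : Type*} [MeasurableSpace Γ] [Countable Γ] [MeasurableSingletonClass Γ]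
  {μ : Measure Γ} [IsProbabilityMeasure μ] {κ : Measure (ℕ → Γ)} [IsProbabilityMeasure κ]

lemma measurePreserving_seqCons [Nonempty Γ]
    (hκ : ∀ w N, κ (prefixCylinder w N) = ∏ n ∈ Finset.range N, μ {w n}) :
    MeasurePreserving (fun p : Γ × (ℕ → Γ) => seqCons p.1 p.2) (μ.prod κ) κ := by
  refine ⟨measurable_seqCons, ext_of_prefixCylinder fun w N => ?_⟩
  rw [Measure.map_apply measurable_seqCons (measurableSet_prefixCylinder w N)]
  cases N with
  | zero => simp
  | succ N =>
    rw [seqCons_preimage_prefixCylinder_succ, Measure.prod_prod, hκ, hκ,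
      Finset.prod_range_succ', mul_comm]

lemma measurePreserving_head_tail [Nonempty Γ]
    (hκ : ∀ w N, κ (prefixCylinder w N) = ∏ n ∈ Finset.range N, μ {w n}) :
    MeasurePreserving (fun η : ℕ → Γ => (η 0, fun n => η (n + 1))) κ (μ.prod κ) := by
  have hcons := measurePreserving_seqCons hκ
  refine ⟨by fun_prop, ?_⟩
  nth_rw 1 [← hcons.map_eq]
  rw [Measure.map_map (by fun_prop) hcons.measurable]
  exact Measure.map_id

omit [IsProbabilityMeasure μ] in
lemma isInvInvariant_of_measure_singleton_inv [Group Γ] (hsym : ∀ γ : Γ, μ {γ} = μ {γ⁻¹}) :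
    μ.IsInvInvariant :=
  ⟨Measure.ext_iff_singleton.mpr fun γ => by
    rw [Measure.inv_apply, Set.inv_singleton, hsym, inv_inv]⟩

end IIDSequences

section Walk

variable {Γ : Type*} [Group Γ]

def shiftIncrements (q : (ℕ → Γ) × (ℕ → Γ)) : (ℕ → Γ) × (ℕ → Γ) :=
  (seqCons (q.2 0)⁻¹ q.1, fun n => q.2 (n + 1))

lemma fwd_seqCons_succ (g : Γ) (ξ : ℕ → Γ) (m : ℕ) :
    fwd (seqCons g ξ) (m + 1) = g * fwd ξ m := by
  induction m with
  | zero => simp [fwd, seqCons]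
  | succ m ih => rw [fwd, ih, fwd, mul_assoc]; rfl

lemma fwd_succ_eq_head_mul (η : ℕ → Γ) (m : ℕ) :
    fwd η (m + 1) = η 0 * fwd (fun n => η (n + 1)) m := by
  induction m with
  | zero => simp [fwd]
  | succ m ih => rw [fwd, ih, fwd, mul_assoc]

@[simp]
lemma twoSided_natCast (ξ η : ℕ → Γ) (m : ℕ) : twoSided ξ η m = fwd ξ m := by
  simp [twoSided]

@[simp]
lemma twoSided_negSucc (ξ η : ℕ → Γ) (m : ℕ) :
    twoSided ξ η (Int.negSucc m) = fwd η (m + 1) := by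
  simp [twoSided, Int.neg_negSucc]

lemma twoSided_shiftIncrements (q : (ℕ → Γ) × (ℕ → Γ)) (n : ℤ) :
    twoSided (shiftIncrements q).1 (shiftIncrements q).2 n =
      (q.2 0)⁻¹ * twoSided q.1 q.2 (n - 1) := by
  obtain ⟨ξ, η⟩ := q
  dsimp only [shiftIncrements]
  rcases n with (_ | m) | m
  · rw [show Int.ofNat 0 - 1 = Int.negSucc 0 from rfl, twoSided_negSucc, fwd_succ_eq_head_mul]
    simp [twoSided, fwd]
  · rw [Int.ofNat_eq_natCast, show ((m + 1 : ℕ) : ℤ) - 1 = m by omega, twoSided_natCast,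
      twoSided_natCast, fwd_seqCons_succ]
  · rw [Int.negSucc_sub_one, twoSided_negSucc, twoSided_negSucc, fwd_succ_eq_head_mul η (m + 1),
      inv_mul_cancel_left]

variable [MeasurableSpace Γ] [Countable Γ] [MeasurableSingletonClass Γ]

lemma measurable_fwd (m : ℕ) : Measurable fun ξ : ℕ → Γ => fwd ξ m := by
  induction m with
  | zero => exact measurable_const
  | succ m ih => exact ih.mul (measurable_pi_apply m)

lemma measurable_twoSided : Measurable fun q : (ℕ → Γ) × (ℕ → Γ) => twoSided q.1 q.2 := by
  refine measurable_pi_lambda _ fun n => ?_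
  simp only [twoSided]
  split_ifs
  · exact (measurable_fwd _).comp measurable_fst
  · exact (measurable_fwd _).comp measurable_snd

lemma measurePreserving_shiftIncrements {μ : Measure Γ} [IsProbabilityMeasure μ]
    {κ : Measure (ℕ → Γ)} [IsProbabilityMeasure κ] (hsym : ∀ γ : Γ, μ {γ} = μ {γ⁻¹})
    (hκ : ∀ w N, κ (prefixCylinder w N) = ∏ n ∈ Finset.range N, μ {w n}) :
    MeasurePreserving shiftIncrements (κ.prod κ) (κ.prod κ) := by
  have := isInvInvariant_of_measure_singleton_inv hsym
  have hcons_inv : MeasurePreserving (fun p : (ℕ → Γ) × Γ => seqCons p.2⁻¹ p.1) (κ.prod μ) κ :=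
    (measurePreserving_seqCons hκ).comp
      (((Measure.measurePreserving_inv μ).prod (.id κ)).comp Measure.measurePreserving_swap)
  exact (hcons_inv.prod (.id κ)).comp <|
    (measurePreserving_prodAssoc κ μ κ).symm.comp ((MeasurePreserving.id κ).prod
      (measurePreserving_head_tail hκ))

end Walk

section Recentring

variable {Γ : Type*} [Group Γ]

lemma preimage_unshift_twoSided_eq_preimage_shiftIncrements
    {A : Set ((Γ × Γ → Bool) × (ℤ → Γ))}
    (hA : ∀ γ : Γ, (fun p : (Γ × Γ → Bool) × (ℤ → Γ) =>
      (logicAct γ p.1, fun n => γ * p.2 n)) ⁻¹' A = A) :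
    Prod.map id (fun q : (ℕ → Γ) × (ℕ → Γ) => twoSided q.1 q.2) ⁻¹'
        ((fun p : (Γ × Γ → Bool) × (ℤ → Γ) => (p.1, fun n => p.2 (n - 1))) ⁻¹' A) =
      (fun p : (Γ × Γ → Bool) × ((ℕ → Γ) × (ℕ → Γ)) =>
          (logicAct (p.2.2 0)⁻¹ p.1, shiftIncrements p.2)) ⁻¹'
        (Prod.map id (fun q : (ℕ → Γ) × (ℕ → Γ) => twoSided q.1 q.2) ⁻¹' A) := by
  ext ⟨E, q⟩
  have hwalk : twoSided (shiftIncrements q).1 (shiftIncrements q).2 =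
      fun n => (q.2 0)⁻¹ * twoSided q.1 q.2 (n - 1) :=
    funext (twoSided_shiftIncrements q)
  conv_lhs => rw [← hA (q.2 0)⁻¹]
  simp only [Set.mem_preimage, Prod.map_apply, id, hwalk]

variable [MeasurableSpace Γ] [Countable Γ] [MeasurableSingletonClass Γ]

lemma measurable_logicAct : Measurable fun p : Γ × (Γ × Γ → Bool) => logicAct p.1 p.2 :=
  measurable_from_prod_countable_right fun γ =>
    show Measurable (logicAct γ) from measurable_pi_lambda _ fun _ => measurable_pi_apply _

lemma measurePreserving_logicAct_shiftIncrements {μ : Measure Γ} [IsProbabilityMeasure μ]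
    {κ : Measure (ℕ → Γ)} [IsProbabilityMeasure κ] {ν : Measure (Γ × Γ → Bool)} [SFinite ν]
    (hν : ∀ γ : Γ, Measure.map (logicAct γ) ν = ν) (hsym : ∀ γ : Γ, μ {γ} = μ {γ⁻¹})
    (hκ : ∀ w N, κ (prefixCylinder w N) = ∏ n ∈ Finset.range N, μ {w n}) :
    MeasurePreserving (fun p : (Γ × Γ → Bool) × ((ℕ → Γ) × (ℕ → Γ)) =>
        (logicAct (p.2.2 0)⁻¹ p.1, shiftIncrements p.2))
      (ν.prod (κ.prod κ)) (ν.prod (κ.prod κ)) := by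
  have hact : Measurable (Function.uncurry fun q : (ℕ → Γ) × (ℕ → Γ) => logicAct (q.2 0)⁻¹) :=
    measurable_logicAct.comp
      (((measurable_pi_apply 0).comp (measurable_snd.comp measurable_fst)).inv.prodMk
        measurable_snd)
  exact ((MeasurePreserving.id ν).prod (measurePreserving_shiftIncrements hsym hκ)).comp
    (MeasurePreserving.fiberwise hact fun _ => hν _)

end Recentring

theorem stmt_19_general {Γ : Type*} [Group Γ] [Countable Γ]
    [MeasurableSpace Γ] [MeasurableSingletonClass Γ]
    (μ : Measure Γ) [IsProbabilityMeasure μ]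
    (hsym : ∀ γ : Γ, μ {γ} = μ {γ⁻¹})
    (κ : Measure (ℕ → Γ)) [IsProbabilityMeasure κ]
    (hκ : ∀ (F : Finset ℕ) (f : ℕ → Γ),
      κ {ξ | ∀ n ∈ F, ξ n = f n} = ∏ n ∈ F, μ {f n})
    (ν : Measure (Γ × Γ → Bool)) [IsProbabilityMeasure ν]
    (hν : ∀ γ : Γ, Measure.map (logicAct γ) ν = ν) :
    ∀ A : Set ((Γ × Γ → Bool) × (ℤ → Γ)), MeasurableSet A →
      (∀ γ : Γ, (fun p : (Γ × Γ → Bool) × (ℤ → Γ) =>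
        (logicAct γ p.1, fun n => γ * p.2 n)) ⁻¹' A = A) →
      (ν.prod (Measure.map (fun q : (ℕ → Γ) × (ℕ → Γ) => twoSided q.1 q.2) (κ.prod κ)))
          ((fun p : (Γ × Γ → Bool) × (ℤ → Γ) => (p.1, fun n => p.2 (n + 1))) '' A)
        = (ν.prod (Measure.map (fun q : (ℕ → Γ) × (ℕ → Γ) => twoSided q.1 q.2)
            (κ.prod κ))) A := by
  intro A hA hinv
  have hκ' : ∀ w N, κ (prefixCylinder w N) = ∏ n ∈ Finset.range N, μ {w n} := fun w N => by
    simpa [prefixCylinder] using hκ (Finset.range N) w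
  have hwalk : Measurable
      (Prod.map (@id (Γ × Γ → Bool)) fun q : (ℕ → Γ) × (ℕ → Γ) => twoSided q.1 q.2) :=
    measurable_id.prodMap measurable_twoSided
  have hunshift : Measurable fun p : (Γ × Γ → Bool) × (ℤ → Γ) => (p.1, fun n => p.2 (n - 1)) := by
    fun_prop
  rw [image_shift_eq_preimage, ← Measure.map_id (μ := ν),
    Measure.map_prod_map ν (κ.prod κ) measurable_id measurable_twoSided,
    Measure.map_apply hwalk (hunshift hA), Measure.map_apply hwalk hA,
    preimage_unshift_twoSided_eq_preimage_shiftIncrements hinv]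
  exact (measurePreserving_logicAct_shiftIncrements hν hsym hκ').measure_preimage
    (hwalk hA).nullMeasurableSet

/-- With `λ = ν × P̂` (for `P̂` the law of the two-sided `μ`-random walk
started at the identity and `ν` a Γ-invariant random equivalence relation), the shift
`S(E, (Z_n)) = (E, (Z_{n+1}))` preserves the measure of every Γ-invariant Borel set. -/
theorem stmt_19 {Γ : Type*} [Group Γ] [Countable Γ] [Infinite Γ]
    [MeasurableSpace Γ] [MeasurableSingletonClass Γ]
    (μ : Measure Γ) [IsProbabilityMeasure μ]
    (hsym : ∀ γ : Γ, μ {γ} = μ {γ⁻¹})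
    (hgen : Subgroup.closure {γ : Γ | μ {γ} ≠ 0} = ⊤)
    (κ : Measure (ℕ → Γ)) [IsProbabilityMeasure κ]
    (hκ : ∀ (F : Finset ℕ) (f : ℕ → Γ),
      κ {ξ | ∀ n ∈ F, ξ n = f n} = ∏ n ∈ F, μ {f n})
    (ν : Measure (Γ × Γ → Bool)) [IsProbabilityMeasure ν]
    (hν : ∀ γ : Γ, Measure.map (logicAct γ) ν = ν)
    (hER : ν {R | IsEquivRel R} = 1) :
    ∀ A : Set ((Γ × Γ → Bool) × (ℤ → Γ)), MeasurableSet A →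
      (∀ γ : Γ, (fun p : (Γ × Γ → Bool) × (ℤ → Γ) =>
        (logicAct γ p.1, fun n => γ * p.2 n)) ⁻¹' A = A) →
      (ν.prod (Measure.map (fun q : (ℕ → Γ) × (ℕ → Γ) => twoSided q.1 q.2) (κ.prod κ)))
          ((fun p : (Γ × Γ → Bool) × (ℤ → Γ) => (p.1, fun n => p.2 (n + 1))) '' A)
        = (ν.prod (Measure.map (fun q : (ℕ → Γ) × (ℕ → Γ) => twoSided q.1 q.2)
            (κ.prod κ))) A :=
  stmt_19_general μ hsym κ hκ ν hν
end
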